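/- arXiv:2202.13357 — 7 statements merged into one kernel-verified Lean document; each statement's English description precedes it below -/
import Mathlib

section
/- Let m < n be nonnegative integers, 0 = γ₀ < γ₁ < ⋯ < γ_n ≤ 1, and let k_j > 0 for 0 ≤ j ≤ m and k_j < 0 for m < j ≤ n. Define S(s) = Σ_{j=0}^n k_j s^{γ_j} for s ∈ [0,∞). Then there exists a unique s₀ ∈ (0,∞) with S(s₀) = 0; moreover S(s) > 0 for 0 ≤ s < s₀ and S(s) < 0 for s₀ < s < ∞. -/
/-!
Write `c = γ (m + 1)`. Every term satisfies `k j ≥ 0, γ j ≤ c` or `k j ≤ 0, γ j ≥ c`, so for `r > 1`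
each term `k j (t r) ^ γ j` is at most `r ^ c` times `k j t ^ γ j`, strictly for `j = 0`. Hence
`S (t r) < r ^ c S t`: once `S` is nonpositive at some `t > 0` it stays negative. Since `S 0 = k 0 > 0`
and the negative terms, of higher order, dominate for large `s`, the intermediate value theorem
gives the unique sign change.
-/

open Finset Filter

lemma mul_rpow_le_mul_rpow {k γ c r : ℝ} (hr : 1 ≤ r)
    (hsign : (0 ≤ k ∧ γ ≤ c) ∨ (k ≤ 0 ∧ c ≤ γ)) : k * r ^ γ ≤ k * r ^ c := by
  rcases hsign with ⟨hk, hγ⟩ | ⟨hk, hγ⟩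
  · exact mul_le_mul_of_nonneg_left (Real.rpow_le_rpow_of_exponent_le hr hγ) hk
  · exact mul_le_mul_of_nonpos_left (Real.rpow_le_rpow_of_exponent_le hr hγ) hk

lemma sum_mul_rpow_le {ι : Type*} {I : Finset ι} {k γ : ι → ℝ} {c r : ℝ} (hr : 1 ≤ r)
    (hsign : ∀ j ∈ I, (0 ≤ k j ∧ γ j ≤ c) ∨ (k j ≤ 0 ∧ c ≤ γ j)) :
    ∑ j ∈ I, k j * r ^ γ j ≤ r ^ c * ∑ j ∈ I, k j := by
  rw [mul_sum]
  refine sum_le_sum fun j hj => ?_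
  rw [mul_comm (r ^ c)]
  exact mul_rpow_le_mul_rpow hr (hsign j hj)

lemma sum_mul_rpow_lt {ι : Type*} {I : Finset ι} {k γ : ι → ℝ} {c r : ℝ} (hr : 1 < r)
    (hsign : ∀ j ∈ I, (0 ≤ k j ∧ γ j ≤ c) ∨ (k j ≤ 0 ∧ c ≤ γ j))
    {j₀ : ι} (hj₀ : j₀ ∈ I) (hk : 0 < k j₀) (hγ : γ j₀ < c) :
    ∑ j ∈ I, k j * r ^ γ j < r ^ c * ∑ j ∈ I, k j := by
  rw [mul_sum]
  refine sum_lt_sum (fun j hj => ?_) ⟨j₀, hj₀, ?_⟩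
  · rw [mul_comm (r ^ c)]
    exact mul_rpow_le_mul_rpow hr.le (hsign j hj)
  · rw [mul_comm (r ^ c)]
    exact mul_lt_mul_of_pos_left (Real.rpow_lt_rpow_of_exponent_lt hr hγ) hk

lemma sum_mul_mul_rpow_lt {ι : Type*} {I : Finset ι} {k γ : ι → ℝ} {c t r : ℝ}
    (ht : 0 < t) (hr : 1 < r) (hsign : ∀ j ∈ I, (0 ≤ k j ∧ γ j ≤ c) ∨ (k j ≤ 0 ∧ c ≤ γ j))
    {j₀ : ι} (hj₀ : j₀ ∈ I) (hk : 0 < k j₀) (hγ : γ j₀ < c) :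
    ∑ j ∈ I, k j * (t * r) ^ γ j < r ^ c * ∑ j ∈ I, k j * t ^ γ j := by
  have htγ (j : ι) : 0 < t ^ γ j := Real.rpow_pos_of_pos ht _
  simp_rw [Real.mul_rpow ht.le (zero_le_one.trans hr.le), ← mul_assoc]
  refine sum_mul_rpow_lt hr (fun j hj => ?_) hj₀ (mul_pos hk (htγ j₀)) hγ
  exact (hsign j hj).imp (fun h => ⟨mul_nonneg h.1 (htγ j).le, h.2⟩)
    (fun h => ⟨mul_nonpos_of_nonpos_of_nonneg h.1 (htγ j).le, h.2⟩)

lemma eventually_sum_mul_rpow_add_sum_mul_rpow_neg {ι : Type*} {A B : Finset ι}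
    {k γ : ι → ℝ} {a b : ℝ} (hab : a < b) (hA : ∀ j ∈ A, 0 ≤ k j ∧ γ j ≤ a)
    (hB : ∀ j ∈ B, k j ≤ 0 ∧ b ≤ γ j) (hN : ∑ j ∈ B, k j < 0) :
    ∀ᶠ r in atTop, ∑ j ∈ A, k j * r ^ γ j + ∑ j ∈ B, k j * r ^ γ j < 0 := by
  set P := ∑ j ∈ A, k j
  set N := ∑ j ∈ B, k j
  filter_upwards [eventually_ge_atTop 1,
    (tendsto_rpow_atTop (sub_pos.2 hab)).eventually_gt_atTop (P / -N)] with r hr hrab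
  have hr0 : 0 < r := zero_lt_one.trans_le hr
  have hdominant : P + r ^ (b - a) * N < 0 := by
    rw [div_lt_iff₀ (neg_pos.2 hN)] at hrab
    linarith
  calc ∑ j ∈ A, k j * r ^ γ j + ∑ j ∈ B, k j * r ^ γ j
      ≤ r ^ a * P + r ^ b * N :=
        add_le_add (sum_mul_rpow_le hr fun j hj => .inl (hA j hj))
          (sum_mul_rpow_le hr fun j hj => .inr (hB j hj))
    _ = r ^ a * (P + r ^ (b - a) * N) := by
        rw [← add_sub_cancel a b, Real.rpow_add hr0, add_sub_cancel_left]
        ring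
    _ < 0 := mul_neg_of_pos_of_neg (Real.rpow_pos_of_pos hr0 a) hdominant

lemma exists_pos_root_of_stays_neg {f : ℝ → ℝ} {b : ℝ} (hf : ContinuousOn f (Set.Ici 0))
    (h0 : 0 < f 0) (hb : 0 ≤ b) (hfb : f b < 0)
    (hneg : ∀ t s, 0 < t → t < s → f t ≤ 0 → f s < 0) :
    ∃ s₀ : ℝ, 0 < s₀ ∧ f s₀ = 0 ∧
      (∀ s : ℝ, 0 ≤ s → s < s₀ → 0 < f s) ∧ (∀ s : ℝ, s₀ < s → f s < 0) := by
  obtain ⟨s₀, ⟨hs₀, -⟩, hfs₀⟩ :=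
    intermediate_value_Icc' hb (hf.mono Set.Icc_subset_Ici_self) ⟨hfb.le, h0.le⟩
  have hs₀pos : 0 < s₀ := hs₀.lt_of_ne (by rintro rfl; linarith)
  refine ⟨s₀, hs₀pos, hfs₀, fun s hs hss₀ => ?_, fun s hs => hneg s₀ s hs₀pos hs hfs₀.le⟩
  rcases hs.eq_or_lt with rfl | hs
  · exact h0
  · by_contra! h
    exact (hneg s s₀ hs hss₀ h).ne hfs₀

lemma continuous_sum_mul_rpow {ι : Type*} {I : Finset ι} {k γ : ι → ℝ}
    (hγ : ∀ j ∈ I, 0 ≤ γ j) : Continuous fun s : ℝ => ∑ j ∈ I, k j * s ^ γ j :=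
  continuous_finsetSum _ fun j hj => continuous_const.mul (Real.continuous_rpow_const (hγ j hj))

section SignPattern

variable {m n : ℕ} {γ k : ℕ → ℝ}

lemma sum_range_mul_zero_rpow (hγ0 : γ 0 = 0) (hγ : StrictMonoOn γ (Set.Iic n)) :
    ∑ j ∈ range (n + 1), k j * (0 : ℝ) ^ γ j = k 0 := by
  rw [sum_eq_single 0 (fun j hj hj0 => ?_) (by simp), hγ0, Real.rpow_zero, mul_one]
  have hγj : γ 0 < γ j :=
    hγ (Nat.zero_le n) (Nat.lt_succ_iff.1 (mem_range.1 hj)) (Nat.pos_of_ne_zero hj0)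
  rw [Real.zero_rpow (hγ0 ▸ hγj).ne', mul_zero]

lemma sign_split_at_succ (hmn : m < n) (hγ : StrictMonoOn γ (Set.Iic n))
    (hkpos : ∀ j, j ≤ m → 0 < k j) (hkneg : ∀ j, m < j → j ≤ n → k j < 0) :
    ∀ j ∈ range (n + 1), (0 ≤ k j ∧ γ j ≤ γ (m + 1)) ∨ (k j ≤ 0 ∧ γ (m + 1) ≤ γ j) := by
  intro j hj
  have hjn := Nat.lt_succ_iff.1 (mem_range.1 hj)
  rcases le_or_gt j m with hjm | hmj
  · exact .inl ⟨(hkpos j hjm).le, hγ.monotoneOn hjn hmn (hjm.trans m.le_succ)⟩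
  · exact .inr ⟨(hkneg j hmj hjn).le, hγ.monotoneOn hmn hjn hmj⟩

lemma sum_range_mul_rpow_neg_of_nonpos (hmn : m < n) (hγ : StrictMonoOn γ (Set.Iic n))
    (hkpos : ∀ j, j ≤ m → 0 < k j) (hkneg : ∀ j, m < j → j ≤ n → k j < 0)
    {t s : ℝ} (ht : 0 < t) (hts : t < s)
    (hSt : ∑ j ∈ range (n + 1), k j * t ^ γ j ≤ 0) :
    ∑ j ∈ range (n + 1), k j * s ^ γ j < 0 := by
  have hγ0m : γ 0 < γ (m + 1) := hγ (Nat.zero_le n) hmn m.succ_pos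
  calc ∑ j ∈ range (n + 1), k j * s ^ γ j
        = ∑ j ∈ range (n + 1), k j * (t * (s / t)) ^ γ j := by rw [mul_div_cancel₀ s ht.ne']
    _ < (s / t) ^ γ (m + 1) * ∑ j ∈ range (n + 1), k j * t ^ γ j :=
        sum_mul_mul_rpow_lt ht ((one_lt_div ht).2 hts) (sign_split_at_succ hmn hγ hkpos hkneg)
          (mem_range.2 n.succ_pos) (hkpos 0 m.zero_le) hγ0m
    _ ≤ 0 := mul_nonpos_of_nonneg_of_nonpos
        (Real.rpow_pos_of_pos (div_pos (ht.trans hts) ht) _).le hSt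

lemma eventually_sum_range_mul_rpow_neg (hmn : m < n) (hγ : StrictMonoOn γ (Set.Iic n))
    (hkpos : ∀ j, j ≤ m → 0 < k j) (hkneg : ∀ j, m < j → j ≤ n → k j < 0) :
    ∀ᶠ s in atTop, ∑ j ∈ range (n + 1), k j * s ^ γ j < 0 := by
  simp_rw [← sum_range_add_sum_Ico _ (Nat.succ_le_succ hmn.le)]
  refine eventually_sum_mul_rpow_add_sum_mul_rpow_neg (hγ hmn.le hmn m.lt_succ_self)
    (fun j hj => ?_) (fun j hj => ?_) (sum_neg (fun j hj => ?_) ⟨m + 1, by simpa using hmn⟩)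
  · have hjm := Nat.lt_succ_iff.1 (mem_range.1 hj)
    exact ⟨(hkpos j hjm).le, hγ.monotoneOn (hjm.trans hmn.le) hmn.le hjm⟩
  · obtain ⟨hmj, hjn⟩ := mem_Ico.1 hj
    exact ⟨(hkneg j hmj (Nat.lt_succ_iff.1 hjn)).le,
      hγ.monotoneOn hmn (Nat.lt_succ_iff.1 hjn) hmj⟩
  · obtain ⟨hmj, hjn⟩ := mem_Ico.1 hj
    exact hkneg j hmj (Nat.lt_succ_iff.1 hjn)

end SignPattern

theorem sum_of_powers_unique_sign_change_general
    (m n : ℕ) (hmn : m < n)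
    (γ k : ℕ → ℝ)
    (hγ0 : γ 0 = 0)
    (hγmono : ∀ j, j < n → γ j < γ (j + 1))
    (hkpos : ∀ j, j ≤ m → 0 < k j)
    (hkneg : ∀ j, m < j → j ≤ n → k j < 0)
    (S : ℝ → ℝ)
    (hS : ∀ s : ℝ, S s = ∑ j ∈ Finset.range (n + 1), k j * s ^ (γ j)) :
    ∃ s₀ : ℝ, 0 < s₀ ∧ S s₀ = 0 ∧
      (∀ s : ℝ, 0 ≤ s → s < s₀ → 0 < S s) ∧
      (∀ s : ℝ, s₀ < s → S s < 0) := by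
  obtain rfl : S = fun s => ∑ j ∈ range (n + 1), k j * s ^ γ j := funext hS
  have hγ : StrictMonoOn γ (Set.Iic n) :=
    strictMonoOn_Iic_of_lt_succ fun j hj => by simpa using hγmono j hj
  have hγ_nonneg (j : ℕ) (hj : j ∈ range (n + 1)) : 0 ≤ γ j :=
    hγ0 ▸ hγ.monotoneOn (Nat.zero_le n) (Nat.lt_succ_iff.1 (mem_range.1 hj)) (Nat.zero_le j)
  obtain ⟨b, hSb, hb⟩ :=
    (eventually_sum_range_mul_rpow_neg hmn hγ hkpos hkneg |>.and (eventually_ge_atTop 0)).exists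
  refine exists_pos_root_of_stays_neg (continuous_sum_mul_rpow hγ_nonneg).continuousOn ?_ hb hSb
    fun t s ht hts => sum_range_mul_rpow_neg_of_nonpos hmn hγ hkpos hkneg ht hts
  simpa only [sum_range_mul_zero_rpow hγ0 hγ] using hkpos 0 m.zero_le

theorem sum_of_powers_unique_sign_change
    (m n : ℕ) (hmn : m < n)
    (γ k : ℕ → ℝ)
    (hγ0 : γ 0 = 0)
    (hγmono : ∀ j, j < n → γ j < γ (j + 1))
    (hγn : γ n ≤ 1)
    (hkpos : ∀ j, j ≤ m → 0 < k j)
    (hkneg : ∀ j, m < j → j ≤ n → k j < 0)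
    (S : ℝ → ℝ)
    (hS : ∀ s : ℝ, S s = ∑ j ∈ Finset.range (n + 1), k j * s ^ (γ j)) :
    ∃ s₀ : ℝ, 0 < s₀ ∧ S s₀ = 0 ∧
      (∀ s : ℝ, 0 ≤ s → s < s₀ → 0 < S s) ∧
      (∀ s : ℝ, s₀ < s → S s < 0) :=
  sum_of_powers_unique_sign_change_general m n hmn γ k hγ0 hγmono hkpos hkneg S hS
end

section
/- Let m < n be nonnegative integers, 0 = γ₀ < γ₁ < ⋯ < γ_n ≤ 1, k_j > 0 for 0 ≤ j ≤ m and k_j < 0 for m < j ≤ n, and S(s) = Σ_{j=0}^n k_j s^{γ_j}. Then for every t ∈ (0,∞), if S(t) ≤ 0 then S′(t) < 0. -/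
/-!
Put `c = γ (m+1)`. Then `k j * γ j ≤ k j * c` for every `j`: the positive coefficients carry
exponents `≤ c`, the negative ones exponents `≥ c`, and the inequality is strict at `j = 0`
because `γ 0 = 0 < c`. Multiplying by `t ^ (γ j - 1) = t ^ γ j / t` and summing gives
`S'(t) < (c / t) * S(t) ≤ 0`.
-/

open Finset

theorem hasDerivAt_sum_mul_rpow {ι : Type*} (s : Finset ι) (k γ : ι → ℝ) {t : ℝ} (ht : 0 < t) :
    HasDerivAt (fun x : ℝ => ∑ j ∈ s, k j * x ^ γ j)
      (∑ j ∈ s, k j * (γ j * t ^ (γ j - 1))) t :=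
  HasDerivAt.fun_sum fun j _ => (Real.hasDerivAt_rpow_const (Or.inl ht.ne')).const_mul (k j)

theorem sum_mul_mul_rpow_sub_one_neg {ι : Type*} {s : Finset ι} {k γ : ι → ℝ} {c t : ℝ}
    (ht : 0 < t) (hc : 0 ≤ c) (hle : ∀ j ∈ s, k j * γ j ≤ k j * c)
    (hlt : ∃ j ∈ s, k j * γ j < k j * c) (hsum : ∑ j ∈ s, k j * t ^ γ j ≤ 0) :
    ∑ j ∈ s, k j * (γ j * t ^ (γ j - 1)) < 0 := by
  have hpow : ∀ j, 0 < t ^ (γ j - 1) := fun j => Real.rpow_pos_of_pos ht _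
  calc ∑ j ∈ s, k j * (γ j * t ^ (γ j - 1))
      = ∑ j ∈ s, k j * γ j * t ^ (γ j - 1) := by simp only [mul_assoc]
    _ < ∑ j ∈ s, k j * c * t ^ (γ j - 1) :=
        sum_lt_sum (fun j hj => mul_le_mul_of_nonneg_right (hle j hj) (hpow j).le)
          (hlt.imp fun j ⟨hj, h⟩ => ⟨hj, mul_lt_mul_of_pos_right h (hpow j)⟩)
    _ = c / t * ∑ j ∈ s, k j * t ^ γ j := by
        rw [mul_sum]
        refine sum_congr rfl fun j _ => ?_
        rw [Real.rpow_sub_one ht.ne']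
        ring
    _ ≤ 0 := mul_nonpos_of_nonneg_of_nonpos (div_nonneg hc ht.le) hsum

theorem sum_of_powers_nonpos_implies_deriv_neg_general
    (m n : ℕ) (hmn : m < n)
    (γ k : ℕ → ℝ)
    (hγ0 : γ 0 = 0)
    (hγmono : ∀ j, j < n → γ j < γ (j + 1))
    (hkpos : ∀ j, j ≤ m → 0 < k j)
    (hkneg : ∀ j, m < j → j ≤ n → k j < 0)
    (S : ℝ → ℝ)
    (hS : ∀ s : ℝ, S s = ∑ j ∈ Finset.range (n + 1), k j * s ^ (γ j))
    (t S' : ℝ) (ht : 0 < t)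
    (hderiv : HasDerivAt S S' t)
    (hSt : S t ≤ 0) :
    S' < 0 := by
  obtain rfl : S = _ := funext hS
  have hγ : StrictMonoOn γ (Set.Iic n) := strictMonoOn_Iic_of_lt_succ hγmono
  have hm : m + 1 ≤ n := hmn
  have hγ0c : γ 0 < γ (m + 1) := hγ (Nat.zero_le n) hm m.succ_pos
  rw [hderiv.unique (hasDerivAt_sum_mul_rpow _ k γ ht)]
  refine sum_mul_mul_rpow_sub_one_neg ht (hγ0 ▸ hγ0c).le (fun j hj => ?_)
    ⟨0, mem_range.2 n.succ_pos, mul_lt_mul_of_pos_left hγ0c (hkpos 0 m.zero_le)⟩ hSt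
  have hjn : j ≤ n := Nat.lt_succ_iff.1 (mem_range.1 hj)
  rcases le_or_gt j m with hjm | hjm
  · exact mul_le_mul_of_nonneg_left (hγ.monotoneOn hjn hm (by omega)) (hkpos j hjm).le
  · exact mul_le_mul_of_nonpos_left (hγ.monotoneOn hm hjn hjm) (hkneg j hjm hjn).le

theorem sum_of_powers_nonpos_implies_deriv_neg
    (m n : ℕ) (hmn : m < n)
    (γ k : ℕ → ℝ)
    (hγ0 : γ 0 = 0)
    (hγmono : ∀ j, j < n → γ j < γ (j + 1))
    (hγn : γ n ≤ 1)
    (hkpos : ∀ j, j ≤ m → 0 < k j)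
    (hkneg : ∀ j, m < j → j ≤ n → k j < 0)
    (S : ℝ → ℝ)
    (hS : ∀ s : ℝ, S s = ∑ j ∈ Finset.range (n + 1), k j * s ^ (γ j))
    (t S' : ℝ) (ht : 0 < t)
    (hderiv : HasDerivAt S S' t)
    (hSt : S t ≤ 0) :
    S' < 0 :=
  sum_of_powers_nonpos_implies_deriv_neg_general m n hmn γ k hγ0 hγmono hkpos hkneg S hS t S' ht
    hderiv hSt
end

section
/- Let ℓ ≥ 1, let 0 < α_ℓ < ⋯ < α₂ < α₁ ≤ 1, let q_i : [0,T] → ℝ be continuous with q_i(t) ≥ 0 and Σᵢ q_i(t) > 0 for all t, and let λ ≥ 0. Suppose w : [0,T] → ℝ is continuous, Lipschitz on every interval [ε,t] with 0 < ε < t ≤ T, and satisfies Σᵢ q_i(t) D_t^{α_i} w(t) + λ w(t) = v(t) for 0 < t ≤ T, where v(t) ≥ 0 for all t and w(0) ≥ 0, with D_t^{α_i} w defined by the reformulated Caputo derivative (and D_t^{α₁} w = w′ if α₁ = 1, assumed left-continuous). Then w(t) ≥ 0 for all t ∈ [0,T]. -/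
open MeasureTheory Set intervalIntegral

/-- Reformulated Caputo derivative of order `α ∈ (0,1)` at time `t`. -/
noncomputable def caputoR (α : ℝ) (w : ℝ → ℝ) (t : ℝ) : ℝ :=
  (1 / Real.Gamma (1 - α)) *
    (t ^ (-α) * (w t - w 0)
      + ∫ s in (0:ℝ)..t, α * (t - s) ^ (-α - 1) * (w t - w s))

/-- Caputo derivative of order `α ∈ (0,1]`: reformulated Caputo derivative for
`α < 1`, ordinary derivative for `α = 1`. -/
noncomputable def caputoD (α : ℝ) (w : ℝ → ℝ) (t : ℝ) : ℝ :=
  if α = 1 then deriv w t else caputoR α w t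

/-!
Perturb `w` to `w + ε t`. If it were negative somewhere on `[0, T]`, its minimum would be attained
at some `t₀ > 0`, and there `w` lies below its past values by at least `ε (t₀ - s)`. Every
fractional term `D^α w (t₀)` is then strictly negative, and so is `w'(t₀)`: were
`w'(t₀) > d > -ε`, left continuity would give `w' > d` on some `(a, t₀)`, and the fundamental
theorem of calculus for the Lipschitz, hence absolutely continuous, function `w` would give
`w t₀ - w a ≥ d (t₀ - a) > -ε (t₀ - a)`, contradicting the growth bound at `a`. This needs no
differentiability of `w` at `t₀` itself, where `deriv` may take its junk value `0`. Hence the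
left-hand side of the equation is negative at `t₀`, contradicting `v ≥ 0`. Letting `ε → 0`
gives `w ≥ 0`.
-/

open Filter Topology

theorem Finset.sum_mul_neg_of_nonneg_of_sum_pos {ι : Type*} {s : Finset ι} {q x : ι → ℝ}
    (hq : ∀ i ∈ s, 0 ≤ q i) (hq_sum : 0 < ∑ i ∈ s, q i) (hx : ∀ i ∈ s, x i < 0) :
    ∑ i ∈ s, q i * x i < 0 := by
  obtain ⟨j, hj, hqj⟩ : ∃ j ∈ s, 0 < q j :=
    Finset.exists_lt_of_sum_lt (by simpa using hq_sum)
  calc ∑ i ∈ s, q i * x i < ∑ i ∈ s, 0 :=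
        Finset.sum_lt_sum (fun i hi => mul_nonpos_of_nonneg_of_nonpos (hq i hi) (hx i hi).le)
          ⟨j, hj, mul_neg_of_pos_of_neg hqj (hx j hj)⟩
    _ = 0 := Finset.sum_const_zero

theorem deriv_le_neg_of_add_mul_sub_le {f : ℝ → ℝ} {b c ε : ℝ} (hbc : b < c)
    (hf : AbsolutelyContinuousOnInterval f b c)
    (hlc : Tendsto (deriv f) (𝓝[<] c) (𝓝 (deriv f c)))
    (hgrowth : ∀ s ∈ Icc b c, f c + ε * (c - s) ≤ f s) : deriv f c ≤ -ε := by
  by_contra! h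
  obtain ⟨d, hεd, hd⟩ := exists_between h
  obtain ⟨l, hl, hsub⟩ := mem_nhdsLT_iff_exists_Ioo_subset.1 (hlc.eventually_const_lt hd)
  set a := max l b
  have hac : a < c := max_lt hl hbc
  have ha : a ∈ Icc b c := ⟨le_max_right l b, hac.le⟩
  have hfac : AbsolutelyContinuousOnInterval f a c :=
    hf.mono (uIcc_subset_uIcc_right (Icc_subset_uIcc ha))
  have hftc : ∫ s in a..c, deriv f s = f c - f a := hfac.integral_deriv_eq_sub
  have hlow : ∫ s in a..c, d ≤ ∫ s in a..c, deriv f s :=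
    integral_mono_on_of_le_Ioo hac.le intervalIntegrable_const
      hfac.intervalIntegrable_deriv
      fun s hs => (hsub ⟨(le_max_left l b).trans_lt hs.1, hs.2⟩).le
  rw [intervalIntegral.integral_const, smul_eq_mul, hftc] at hlow
  nlinarith [hgrowth a ha]

theorem caputoR_neg_of_isMinOn {α t : ℝ} {w : ℝ → ℝ} (hα0 : 0 ≤ α) (hα1 : α < 1) (ht : 0 < t)
    (hmin : IsMinOn w (Icc 0 t) t) (h0 : w t < w 0) : caputoR α w t < 0 := by
  have hΓ : 0 < 1 / Real.Gamma (1 - α) := one_div_pos.2 (Real.Gamma_pos_of_pos (by linarith))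
  have hfirst : t ^ (-α) * (w t - w 0) < 0 :=
    mul_neg_of_pos_of_neg (Real.rpow_pos_of_pos ht _) (by linarith)
  have hmemory : 0 ≤ ∫ s in (0:ℝ)..t, -(α * (t - s) ^ (-α - 1) * (w t - w s)) :=
    integral_nonneg ht.le fun s hs => neg_nonneg.2 <| mul_nonpos_of_nonneg_of_nonpos
      (mul_nonneg hα0 (Real.rpow_nonneg (sub_nonneg.2 hs.2) _)) (sub_nonpos.2 (isMinOn_iff.1 hmin s hs))
  rw [intervalIntegral.integral_neg] at hmemory
  exact mul_neg_of_pos_of_neg hΓ (by linarith)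

theorem caputoD_neg_of_add_mul_sub_le {α t ε : ℝ} {w : ℝ → ℝ} (hα0 : 0 < α) (hα1 : α ≤ 1)
    (ht : 0 < t) (hε : 0 < ε) (hgrowth : ∀ s ∈ Icc 0 t, w t + ε * (t - s) ≤ w s)
    (hderiv : α = 1 → AbsolutelyContinuousOnInterval w (t / 2) t ∧
      Tendsto (deriv w) (𝓝[<] t) (𝓝 (deriv w t))) :
    caputoD α w t < 0 := by
  unfold caputoD
  split_ifs with h1
  · obtain ⟨hac, hlc⟩ := hderiv h1
    have := deriv_le_neg_of_add_mul_sub_le (by linarith) hac hlc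
      fun s hs => hgrowth s ⟨by linarith [hs.1], hs.2⟩
    linarith
  · refine caputoR_neg_of_isMinOn hα0.le (lt_of_le_of_ne hα1 h1) ht
      (isMinOn_iff.2 fun s hs => ?_) (by nlinarith [hgrowth 0 ⟨le_rfl, ht.le⟩])
    nlinarith [hgrowth s hs, hs.2]

theorem comparison_principle_multiterm_IVP_general
    (T : ℝ)
    (ℓ : ℕ)
    (α : Fin ℓ → ℝ)
    (hα_pos : ∀ i, 0 < α i)
    (hα_le1 : ∀ i, α i ≤ 1)
    (q : Fin ℓ → ℝ → ℝ)
    (hq_nonneg : ∀ i, ∀ t ∈ Icc (0:ℝ) T, 0 ≤ q i t)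
    (hq_sum : ∀ t ∈ Icc (0:ℝ) T, 0 < ∑ i, q i t)
    (lam : ℝ) (hlam : 0 ≤ lam)
    (v w : ℝ → ℝ)
    (hv : ∀ t ∈ Ioc (0:ℝ) T, 0 ≤ v t)
    (hw_cont : ContinuousOn w (Icc 0 T))
    (hw_lip : ∀ ε t : ℝ, 0 < ε → ε < t → t ≤ T →
      ∃ C : NNReal, LipschitzOnWith C w (Icc ε t))
    (hw'_leftcont : (∃ i, α i = 1) →
      ∀ t ∈ Ioc (0:ℝ) T,
        Filter.Tendsto (deriv w) (nhdsWithin t (Iio t)) (nhds (deriv w t)))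
    (hw0 : 0 ≤ w 0)
    (heq : ∀ t ∈ Ioc (0:ℝ) T,
      (∑ i, q i t * caputoD (α i) w t) + lam * w t = v t) :
    ∀ t ∈ Icc (0:ℝ) T, 0 ≤ w t := by
  intro t ht
  have hperturbed : ∀ ε > 0, 0 ≤ w t + ε * t := by
    intro ε hε
    by_contra! hneg
    obtain ⟨t₀, ht₀, hmin⟩ := isCompact_Icc.exists_isMinOn (f := fun s => w s + ε * s) ⟨t, ht⟩
      (hw_cont.add (continuousOn_const.mul continuousOn_id))
    have hneg₀ : w t₀ + ε * t₀ < 0 := (hmin ht).trans_lt hneg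
    have ht₀pos : 0 < t₀ := ht₀.1.lt_of_ne (by rintro rfl; linarith)
    have ht₀' : t₀ ∈ Ioc 0 T := ⟨ht₀pos, ht₀.2⟩
    have hgrowth : ∀ s ∈ Icc 0 t₀, w t₀ + ε * (t₀ - s) ≤ w s := fun s hs => by
      linarith [isMinOn_iff.1 hmin s ⟨hs.1, hs.2.trans ht₀.2⟩]
    obtain ⟨C, hC⟩ := hw_lip (t₀ / 2) t₀ (by positivity) (by linarith) ht₀.2
    have hcaputo : ∀ i, caputoD (α i) w t₀ < 0 := fun i =>
      caputoD_neg_of_add_mul_sub_le (hα_pos i) (hα_le1 i) ht₀pos hε hgrowth fun h1 =>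
        ⟨(uIcc_of_le (half_le_self ht₀pos.le) ▸ hC).absolutelyContinuousOnInterval,
          hw'_leftcont ⟨i, h1⟩ t₀ ht₀'⟩
    have hsum := Finset.sum_mul_neg_of_nonneg_of_sum_pos (fun i _ => hq_nonneg i t₀ ht₀)
      (hq_sum t₀ ht₀) fun i _ => hcaputo i
    have hlamw : lam * w t₀ ≤ 0 := mul_nonpos_of_nonneg_of_nonpos hlam (by nlinarith)
    linarith [heq t₀ ht₀', hv t₀ ht₀']
  have hcont : Continuous fun ε : ℝ => w t + ε * t := by fun_prop
  have hlim : Tendsto (fun ε => w t + ε * t) (𝓝[>] 0) (𝓝 (w t + 0 * t)) :=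
    tendsto_nhdsWithin_of_tendsto_nhds (hcont.tendsto 0)
  simpa using ge_of_tendsto hlim (eventually_mem_nhdsWithin.mono hperturbed)

theorem comparison_principle_multiterm_IVP
    (T : ℝ) (hT : 0 < T)
    (ℓ : ℕ) (hℓ : 1 ≤ ℓ)
    (α : Fin ℓ → ℝ)
    (hα_pos : ∀ i, 0 < α i)
    (hα_le1 : ∀ i, α i ≤ 1)
    (hα_dec : ∀ i j : Fin ℓ, i < j → α j < α i)
    (q : Fin ℓ → ℝ → ℝ)
    (hq_cont : ∀ i, ContinuousOn (q i) (Icc 0 T))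
    (hq_nonneg : ∀ i, ∀ t ∈ Icc (0:ℝ) T, 0 ≤ q i t)
    (hq_sum : ∀ t ∈ Icc (0:ℝ) T, 0 < ∑ i, q i t)
    (lam : ℝ) (hlam : 0 ≤ lam)
    (v w : ℝ → ℝ)
    (hv : ∀ t ∈ Ioc (0:ℝ) T, 0 ≤ v t)
    (hw_cont : ContinuousOn w (Icc 0 T))
    (hw_lip : ∀ ε t : ℝ, 0 < ε → ε < t → t ≤ T →
      ∃ C : NNReal, LipschitzOnWith C w (Icc ε t))
    (hw'_leftcont : (∃ i, α i = 1) →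
      ∀ t ∈ Ioc (0:ℝ) T,
        Filter.Tendsto (deriv w) (nhdsWithin t (Iio t)) (nhds (deriv w t)))
    (hw0 : 0 ≤ w 0)
    (heq : ∀ t ∈ Ioc (0:ℝ) T,
      (∑ i, q i t * caputoD (α i) w t) + lam * w t = v t) :
    ∀ t ∈ Icc (0:ℝ) T, 0 ≤ w t :=
  comparison_principle_multiterm_IVP_general T ℓ α hα_pos hα_le1 q hq_nonneg hq_sum lam hlam v w hv
    hw_cont hw_lip hw'_leftcont hw0 heq
end

section
/- Let 0 < α < 1 and suppose w : [0,T] → ℝ attains at t₀ ∈ (0,T] a value w(t₀) that is ≤ w(s) for all s ∈ [0,T] and strictly less than w(0). If w is continuous on [0,T] and Lipschitz on intervals bounded away from 0, then the reformulated Caputo derivative D_t^α w(t₀) = (1/Γ(1−α)) [ t₀^(−α)(w(t₀) − w(0)) + ∫₀^{t₀} α(t₀−s)^(−α−1)(w(t₀) − w(s)) ds ] is strictly negative. -/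
open MeasureTheory Set intervalIntegral

theorem reformulated_caputo_neg_at_negative_minimum
    (T α : ℝ) (hT : 0 < T) (hα0 : 0 < α) (hα1 : α < 1)
    (w : ℝ → ℝ)
    (hw_cont : ContinuousOn w (Icc 0 T))
    (hw_lip : ∀ ε t : ℝ, 0 < ε → ε < t → t ≤ T →
      ∃ C : NNReal, LipschitzOnWith C w (Icc ε t))
    (t₀ : ℝ) (ht₀ : t₀ ∈ Ioc (0:ℝ) T)
    (hmin : ∀ s ∈ Icc (0:ℝ) T, w t₀ ≤ w s)
    (hlt0 : w t₀ < w 0) :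
    (1 / Real.Gamma (1 - α)) *
        (t₀ ^ (-α) * (w t₀ - w 0)
          + ∫ s in (0:ℝ)..t₀, α * (t₀ - s) ^ (-α - 1) * (w t₀ - w s)) < 0 := by
  obtain ⟨ht₀0, ht₀T⟩ := ht₀
  have hΓ : 0 < Real.Gamma (1 - α) := Real.Gamma_pos_of_pos (by linarith)
  have hb : t₀ ^ (-α) * (w t₀ - w 0) < 0 :=
    mul_neg_of_pos_of_neg (Real.rpow_pos_of_pos ht₀0 _) (by linarith)
  have hint : (∫ s in (0:ℝ)..t₀, α * (t₀ - s) ^ (-α - 1) * (w t₀ - w s)) ≤ 0 := by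
    have hnn : 0 ≤ ∫ s in (0:ℝ)..t₀, -(α * (t₀ - s) ^ (-α - 1) * (w t₀ - w s)) := by
      apply intervalIntegral.integral_nonneg ht₀0.le
      intro u hu
      have h1 : (0:ℝ) ≤ (t₀ - u) ^ (-α - 1) := Real.rpow_nonneg (by linarith [hu.2]) _
      have h2 : w t₀ - w u ≤ 0 := by
        have := hmin u ⟨hu.1, le_trans hu.2 ht₀T⟩
        linarith
      have := mul_nonpos_of_nonneg_of_nonpos (mul_nonneg hα0.le h1) h2
      linarith
    rw [intervalIntegral.integral_neg] at hnn
    linarith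
  exact mul_neg_of_pos_of_neg (by positivity) (by linarith)
end

section
/- Suppose α₁ = 1, q₁(t) > 0 for all t ∈ [0,T], q_i ∈ C[0,T] for all i, v ∈ C[0,T], λ ≥ 0, and 0 < α_ℓ < ⋯ < α₂ < 1. Then the initial-value problem q₁(t) w′(t) + Σ_{i=2}^ℓ q_i(t) D_t^{α_i} w(t) + λ w(t) = v(t) for 0 < t ≤ T, w(0) = w₀, has a solution w ∈ C¹[0,T]. -/
open MeasureTheory Set intervalIntegral Filter

lemma ker_meas (σ α : ℝ) : Measurable fun u : ℝ => Real.exp (-(σ*u)) * u ^ (-α) := by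
  exact ((Real.continuous_exp.comp (continuous_const.mul continuous_id).neg).measurable).mul (measurable_id.pow_const _)

lemma ker_integrableOn (T σ α : ℝ) (hσ : 0 ≤ σ) (hα1 : α < 1) :
    IntegrableOn (fun u : ℝ => Real.exp (-(σ*u)) * u ^ (-α)) (Ioc 0 T) := by
  rcases le_or_gt T 0 with h | h
  · rw [Ioc_eq_empty (by exact fun hc => absurd (hc.trans_le h) (lt_irrefl 0))]
    exact integrableOn_empty
  · refine (intervalIntegrable_iff_integrableOn_Ioc_of_le h.le).mp ?_
    exact (intervalIntegrable_rpow' (by linarith)).continuousOn_mul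
      (Real.continuous_exp.comp (continuous_const.mul continuous_id).neg).continuousOn

lemma ker_repr (T σ α : ℝ) (h : ℝ → ℝ) (t : ℝ) (ht : t ∈ Icc 0 T) :
    ∫ s in (0:ℝ)..t, Real.exp (-(σ*(t-s))) * (t-s) ^ (-α) * h s
      = ∫ u in Ioc (0:ℝ) T,
          (Ioc 0 t).indicator (fun u => Real.exp (-(σ*u)) * u ^ (-α) * h (t-u)) u := by
  have h1 : (fun s => Real.exp (-(σ*(t-s))) * (t-s) ^ (-α) * h s)
      = fun s => (fun u => Real.exp (-(σ*u)) * u ^ (-α) * h (t-u)) (t - s) := by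
    funext s; simp [sub_sub_cancel]
  rw [h1, integral_comp_sub_left (fun u => Real.exp (-(σ*u)) * u ^ (-α) * h (t-u)) t]
  rw [sub_self, sub_zero, integral_of_le ht.1,
    setIntegral_indicator measurableSet_Ioc, Ioc_inter_Ioc]
  congr 1
  simp [min_eq_right ht.2]

lemma ind_integrable (T σ α : ℝ) (hσ : 0 ≤ σ) (hα1 : α < 1)
    (h : ℝ → ℝ) (hm : Measurable h) (D : ℝ) (hD : ∀ x, |h x| ≤ D) (t : ℝ) :
    Integrable ((Ioc 0 t).indicator fun u => Real.exp (-(σ*u)) * u ^ (-α) * h (t-u))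
      (volume.restrict (Ioc 0 T)) := by
  have hD0 : 0 ≤ D := le_trans (abs_nonneg _) (hD 0)
  refine Integrable.mono' ((ker_integrableOn T σ α hσ hα1).mul_const D) ?_ ?_
  · exact (((ker_meas σ α).mul (hm.comp (measurable_const.sub measurable_id))).indicator
      measurableSet_Ioc).aestronglyMeasurable
  · filter_upwards [ae_restrict_mem measurableSet_Ioc] with u hu
    have hker : 0 ≤ Real.exp (-(σ*u)) * u ^ (-α) :=
      mul_nonneg (Real.exp_nonneg _) (Real.rpow_nonneg hu.1.le _)
    by_cases hut : u ∈ Ioc 0 t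
    · rw [indicator_of_mem hut]
      rw [Real.norm_eq_abs, abs_mul, abs_of_nonneg hker]
      exact mul_le_mul_of_nonneg_left (hD _) hker
    · rw [indicator_of_notMem hut]
      simpa using mul_nonneg hker hD0

lemma ind_bound (T σ α : ℝ) (hσ : 0 ≤ σ) (hα1 : α < 1)
    (h : ℝ → ℝ) (hm : Measurable h) (D : ℝ) (hD : ∀ x, |h x| ≤ D) (t : ℝ) :
    |∫ u in Ioc (0:ℝ) T,
        (Ioc 0 t).indicator (fun u => Real.exp (-(σ*u)) * u ^ (-α) * h (t-u)) u|
      ≤ D * ∫ u in Ioc (0:ℝ) T, Real.exp (-(σ*u)) * u ^ (-α) := by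
  have hD0 : 0 ≤ D := le_trans (abs_nonneg _) (hD 0)
  have hb := MeasureTheory.norm_integral_le_of_norm_le
    (f := (Ioc 0 t).indicator fun u => Real.exp (-(σ*u)) * u ^ (-α) * h (t-u))
    (g := fun u => Real.exp (-(σ*u)) * u ^ (-α) * D)
    ((ker_integrableOn T σ α hσ hα1).mul_const D) ?_
  · rw [Real.norm_eq_abs] at hb
    calc _ ≤ ∫ u in Ioc (0:ℝ) T, Real.exp (-(σ*u)) * u ^ (-α) * D := hb
    _ = _ := by rw [MeasureTheory.integral_mul_const]; ring
  · filter_upwards [ae_restrict_mem measurableSet_Ioc] with u hu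
    have hker : 0 ≤ Real.exp (-(σ*u)) * u ^ (-α) :=
      mul_nonneg (Real.exp_nonneg _) (Real.rpow_nonneg hu.1.le _)
    by_cases hut : u ∈ Ioc 0 t
    · rw [indicator_of_mem hut]
      rw [Real.norm_eq_abs, abs_mul, abs_of_nonneg hker]
      exact mul_le_mul_of_nonneg_left (hD _) hker
    · rw [indicator_of_notMem hut]
      simpa using mul_nonneg hker hD0

lemma J_nonneg (T σ α : ℝ) : 0 ≤ ∫ u in Ioc (0:ℝ) T, Real.exp (-(σ*u)) * u ^ (-α) :=
  setIntegral_nonneg measurableSet_Ioc fun u hu =>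
    mul_nonneg (Real.exp_nonneg _) (Real.rpow_nonneg hu.1.le _)

lemma J_tendsto (T α : ℝ) (hα1 : α < 1) :
    Tendsto (fun σ : ℝ => ∫ u in Ioc (0:ℝ) T, Real.exp (-(σ*u)) * u ^ (-α))
      atTop (nhds 0) := by
  suffices key : Tendsto (fun σ : ℝ => ∫ u in Ioc (0:ℝ) T, Real.exp (-(σ*u)) * u ^ (-α))
      atTop (nhds (∫ u in Ioc (0:ℝ) T, (0:ℝ))) by simpa using key
  refine MeasureTheory.tendsto_integral_filter_of_dominated_convergence
    (l := atTop) (μ := volume.restrict (Ioc (0:ℝ) T))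
    (F := fun σ u => Real.exp (-(σ*u)) * u ^ (-α)) (f := fun _ => (0:ℝ))
    (bound := fun u => u ^ (-α)) ?_ ?_ ?_ ?_
  · exact Eventually.of_forall fun σ => (ker_meas σ α).aestronglyMeasurable
  · filter_upwards [eventually_ge_atTop (0:ℝ)] with σ hσ
    filter_upwards [ae_restrict_mem measurableSet_Ioc] with u hu
    rw [Real.norm_eq_abs, abs_mul, abs_of_nonneg (Real.exp_nonneg _),
      abs_of_nonneg (Real.rpow_nonneg hu.1.le _)]
    have : Real.exp (-(σ*u)) ≤ 1 :=
      Real.exp_le_one_iff.2 (by nlinarith [hu.1.le])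
    nlinarith [Real.rpow_nonneg hu.1.le (-α)]
  · rcases le_or_gt T 0 with h | h
    · rw [Ioc_eq_empty (by exact fun hc => absurd (hc.trans_le h) (lt_irrefl 0))]
      exact integrableOn_empty
    · exact (intervalIntegrable_iff_integrableOn_Ioc_of_le h.le).mp
        (intervalIntegrable_rpow' (by linarith))
  · filter_upwards [ae_restrict_mem measurableSet_Ioc] with u hu
    have h1 : Tendsto (fun σ : ℝ => σ * u) atTop atTop :=
      tendsto_id.atTop_mul_const hu.1
    have h2 : Tendsto (fun σ : ℝ => Real.exp (-(σ*u))) atTop (nhds 0) :=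
      Real.tendsto_exp_atBot.comp (tendsto_neg_atTop_atBot.comp h1)
    simpa using h2.mul_const (u ^ (-α))

lemma ker_contOn (T σ α : ℝ) (hσ : 0 ≤ σ) (hα1 : α < 1)
    (h : ℝ → ℝ) (hc : Continuous h) (M : ℝ) (hM : ∀ x, |h x| ≤ M) :
    ContinuousOn (fun t => ∫ s in (0:ℝ)..t, Real.exp (-(σ*(t-s))) * (t-s) ^ (-α) * h s)
      (Icc 0 T) := by
  have hG : Continuous fun t => ∫ u in Ioc (0:ℝ) T,
      (Ioc 0 t).indicator (fun u => Real.exp (-(σ*u)) * u ^ (-α) * h (t-u)) u := by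
    rw [continuous_iff_continuousAt]
    intro t₀
    refine MeasureTheory.continuousAt_of_dominated
      (bound := fun u => Real.exp (-(σ*u)) * u ^ (-α) * M) ?_ ?_ ?_ ?_
    · refine Eventually.of_forall fun t => ?_
      exact (((ker_meas σ α).mul ((hc.measurable).comp
        (measurable_const.sub measurable_id))).indicator measurableSet_Ioc).aestronglyMeasurable
    · refine Eventually.of_forall fun t => ?_
      filter_upwards [ae_restrict_mem measurableSet_Ioc] with u hu
      have hker : 0 ≤ Real.exp (-(σ*u)) * u ^ (-α) :=
        mul_nonneg (Real.exp_nonneg _) (Real.rpow_nonneg hu.1.le _)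
      have hM0 : 0 ≤ M := le_trans (abs_nonneg _) (hM 0)
      by_cases hut : u ∈ Ioc 0 t
      · rw [indicator_of_mem hut, Real.norm_eq_abs, abs_mul, abs_of_nonneg hker]
        exact mul_le_mul_of_nonneg_left (hM _) hker
      · rw [indicator_of_notMem hut]
        simpa using mul_nonneg hker hM0
    · exact (ker_integrableOn T σ α hσ hα1).mul_const M
    · have hne : ∀ᵐ u : ℝ ∂(volume.restrict (Ioc (0:ℝ) T)), u ≠ t₀ := by
        refine ae_restrict_of_ae ?_
        rw [MeasureTheory.ae_iff]
        simpa using measure_singleton t₀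
      filter_upwards [ae_restrict_mem measurableSet_Ioc, hne] with u hu hune
      rcases lt_or_gt_of_ne hune with hlt | hgt
      · have hcont : ContinuousAt (fun t => Real.exp (-(σ*u)) * u ^ (-α) * h (t-u)) t₀ :=
          (continuous_const.mul (hc.comp (continuous_id.sub continuous_const))).continuousAt
        refine hcont.congr ?_
        filter_upwards [Ioi_mem_nhds hlt] with t htu
        rw [indicator_of_mem (show u ∈ Ioc 0 t from ⟨hu.1, le_of_lt htu⟩)]
      · refine (continuousAt_const : ContinuousAt (fun _ : ℝ => (0:ℝ)) t₀).congr ?_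
        filter_upwards [Iio_mem_nhds hgt] with t htu
        rw [indicator_of_notMem (show u ∉ Ioc 0 t from fun hmem => absurd hmem.2 (not_le.2 htu))]
  exact hG.continuousOn.congr fun t ht => ker_repr T σ α h t ht

theorem volterra_exists (T : ℝ) (hT : 0 < T) (n : ℕ) (αs : Fin n → ℝ)
    (hα0 : ∀ i, 0 ≤ αs i) (hα1 : ∀ i, αs i < 1)
    (c : Fin n → ℝ → ℝ) (hc : ∀ i, Continuous (c i))
    (g : ℝ → ℝ) (hg : Continuous g) :
    ∃ φ : ℝ → ℝ, Continuous φ ∧ ∀ t ∈ Icc (0:ℝ) T,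
      φ t + ∑ i, c i t * ∫ s in (0:ℝ)..t, (t - s) ^ (-(αs i)) * φ s = g t := by
  have hCex : ∀ i : Fin n, ∃ C : ℝ, ∀ x ∈ Icc (0:ℝ) T, ‖c i x‖ ≤ C :=
    fun i => isCompact_Icc.exists_bound_of_continuousOn (hc i).continuousOn
  choose C hC using hCex
  have hC0 : ∀ i, 0 ≤ C i := fun i => le_trans (norm_nonneg _) (hC i 0 ⟨le_refl _, hT.le⟩)
  have hCabs : ∀ i, ∀ x ∈ Icc (0:ℝ) T, |c i x| ≤ C i := hC
  have hρtend : Tendsto (fun σ : ℝ => ∑ i, C i *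
      ∫ u in Ioc (0:ℝ) T, Real.exp (-(σ*u)) * u ^ (-(αs i))) atTop (nhds 0) := by
    have h1 := tendsto_finset_sum (Finset.univ (α := Fin n))
      (f := fun i σ => C i * ∫ u in Ioc (0:ℝ) T, Real.exp (-(σ*u)) * u ^ (-(αs i)))
      (a := fun i => C i * 0)
      (fun i _ => (J_tendsto T (αs i) (hα1 i)).const_mul (C i))
    simpa using h1
  obtain ⟨σ, hσ0, hσρ⟩ : ∃ σ : ℝ, 0 ≤ σ ∧
      (∑ i, C i * ∫ u in Ioc (0:ℝ) T, Real.exp (-(σ*u)) * u ^ (-(αs i))) < 1 := by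
    rcases ((hρtend.eventually_lt_const (by norm_num : (0:ℝ) < 1)).and
      (eventually_ge_atTop (0:ℝ))).exists with ⟨σ, h1, h2⟩
    exact ⟨σ, h2, h1⟩
  set J : Fin n → ℝ := fun i => ∫ u in Ioc (0:ℝ) T, Real.exp (-(σ*u)) * u ^ (-(αs i)) with hJdef
  set ρ : ℝ := ∑ i, C i * J i with hρdef
  have hρ0 : 0 ≤ ρ := Finset.sum_nonneg fun i _ => mul_nonneg (hC0 i) (J_nonneg T σ (αs i))
  let X := C(↥(Icc (0:ℝ) T), ℝ)
  let eψ : X → ℝ → ℝ := fun ψ t => ψ (projIcc 0 T hT.le t)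
  have heψ_cont : ∀ ψ : X, Continuous (eψ ψ) := fun ψ => ψ.continuous.comp continuous_projIcc
  have heψ_bdd : ∀ ψ : X, ∀ x, |eψ ψ x| ≤ ‖ψ‖ := fun ψ x => ψ.norm_coe_le_norm _
  have hΦcont : ∀ ψ : X, Continuous fun x : ↥(Icc (0:ℝ) T) =>
      Real.exp (-(σ * ↑x)) * g ↑x - ∑ i, c i ↑x *
        ∫ s in (0:ℝ)..(x:ℝ), Real.exp (-(σ*((x:ℝ)-s))) * ((x:ℝ)-s) ^ (-(αs i)) * eψ ψ s := by
    intro ψ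
    have hco : ContinuousOn (fun t : ℝ => Real.exp (-(σ * t)) * g t - ∑ i, c i t *
        ∫ s in (0:ℝ)..t, Real.exp (-(σ*(t-s))) * (t-s) ^ (-(αs i)) * eψ ψ s) (Icc 0 T) := by
      refine ContinuousOn.sub ?_ ?_
      · exact ((Real.continuous_exp.comp
          (continuous_const.mul continuous_id).neg).mul hg).continuousOn
      · refine continuousOn_finset_sum _ fun i _ => ?_
        exact (hc i).continuousOn.mul
          (ker_contOn T σ (αs i) hσ0 (hα1 i) (eψ ψ) (heψ_cont ψ) ‖ψ‖ (heψ_bdd ψ))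
    exact hco.restrict
  let Φ : X → X := fun ψ => ⟨_, hΦcont ψ⟩
  have hlip : ∀ ψ₁ ψ₂ : X, dist (Φ ψ₁) (Φ ψ₂) ≤ ρ * dist ψ₁ ψ₂ := by
    intro ψ₁ ψ₂
    refine (ContinuousMap.dist_le (mul_nonneg hρ0 dist_nonneg)).2 fun x => ?_
    have hx : (x:ℝ) ∈ Icc (0:ℝ) T := x.2
    have hDle : ∀ y, |eψ ψ₁ y - eψ ψ₂ y| ≤ dist ψ₁ ψ₂ := fun y => by
      rw [← Real.dist_eq]; exact ContinuousMap.dist_apply_le_dist _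
    have hterm : ∀ i : Fin n,
        |(∫ s in (0:ℝ)..(x:ℝ), Real.exp (-(σ*((x:ℝ)-s))) * ((x:ℝ)-s) ^ (-(αs i)) * eψ ψ₁ s)
          - ∫ s in (0:ℝ)..(x:ℝ), Real.exp (-(σ*((x:ℝ)-s))) * ((x:ℝ)-s) ^ (-(αs i)) * eψ ψ₂ s|
        ≤ dist ψ₁ ψ₂ * J i := by
      intro i
      have hint1 := ind_integrable T σ (αs i) hσ0 (hα1 i) (eψ ψ₁)
        (heψ_cont ψ₁).measurable ‖ψ₁‖ (heψ_bdd ψ₁) (x:ℝ)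
      have hint2 := ind_integrable T σ (αs i) hσ0 (hα1 i) (eψ ψ₂)
        (heψ_cont ψ₂).measurable ‖ψ₂‖ (heψ_bdd ψ₂) (x:ℝ)
      have hsub : (∫ s in (0:ℝ)..(x:ℝ),
            Real.exp (-(σ*((x:ℝ)-s))) * ((x:ℝ)-s) ^ (-(αs i)) * eψ ψ₁ s)
          - (∫ s in (0:ℝ)..(x:ℝ),
            Real.exp (-(σ*((x:ℝ)-s))) * ((x:ℝ)-s) ^ (-(αs i)) * eψ ψ₂ s)
          = ∫ u in Ioc (0:ℝ) T, (Ioc 0 (x:ℝ)).indicator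
              (fun u => Real.exp (-(σ*u)) * u ^ (-(αs i)) *
                (eψ ψ₁ ((x:ℝ)-u) - eψ ψ₂ ((x:ℝ)-u))) u := by
        rw [ker_repr T σ (αs i) (eψ ψ₁) _ hx, ker_repr T σ (αs i) (eψ ψ₂) _ hx,
          ← MeasureTheory.integral_sub hint1 hint2]
        congr 1
        funext u
        have heq : (fun u => Real.exp (-(σ*u)) * u ^ (-(αs i)) *
              (eψ ψ₁ ((x:ℝ)-u) - eψ ψ₂ ((x:ℝ)-u)))
            = fun u => (Real.exp (-(σ*u)) * u ^ (-(αs i)) * eψ ψ₁ ((x:ℝ)-u))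
              - (Real.exp (-(σ*u)) * u ^ (-(αs i)) * eψ ψ₂ ((x:ℝ)-u)) := by
          funext u; ring
        rw [heq, Set.indicator_sub]
      rw [hsub]
      have := ind_bound T σ (αs i) hσ0 (hα1 i)
        (fun y => eψ ψ₁ y - eψ ψ₂ y) ((heψ_cont ψ₁).sub (heψ_cont ψ₂)).measurable
        (dist ψ₁ ψ₂) hDle (x:ℝ)
      exact this
    have hdiff : (Φ ψ₁) x - (Φ ψ₂) x = ∑ i, c i ↑x *
        ((∫ s in (0:ℝ)..(x:ℝ), Real.exp (-(σ*((x:ℝ)-s))) * ((x:ℝ)-s) ^ (-(αs i)) * eψ ψ₂ s)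
         - ∫ s in (0:ℝ)..(x:ℝ), Real.exp (-(σ*((x:ℝ)-s))) * ((x:ℝ)-s) ^ (-(αs i)) * eψ ψ₁ s) := by
      show (Real.exp (-(σ * ↑x)) * g ↑x - ∑ i, _) - (Real.exp (-(σ * ↑x)) * g ↑x - ∑ i, _) = _
      rw [show ∀ a b c : ℝ, (a - b) - (a - c) = c - b from fun a b c => by ring]
      rw [← Finset.sum_sub_distrib]
      exact Finset.sum_congr rfl fun i _ => (mul_sub _ _ _).symm
    rw [Real.dist_eq, hdiff]
    refine le_trans (Finset.abs_sum_le_sum_abs _ _) ?_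
    refine le_trans (Finset.sum_le_sum (f := fun i => _)
      (g := fun i => C i * (dist ψ₁ ψ₂ * J i)) fun i _ => ?_) ?_
    · simp only [abs_mul]
      refine mul_le_mul (hCabs i ↑x hx) ?_ (abs_nonneg _) (hC0 i)
      rw [abs_sub_comm]
      exact hterm i
    · refine le_of_eq ?_
      rw [hρdef, Finset.sum_mul]
      exact Finset.sum_congr rfl fun i _ => by ring
  have hcontr : ContractingWith (Real.toNNReal ρ) Φ := by
    constructor
    · exact Real.toNNReal_lt_one.2 hσρ
    · exact LipschitzWith.of_dist_le_mul fun ψ₁ ψ₂ => by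
        rw [Real.coe_toNNReal ρ hρ0]; exact hlip ψ₁ ψ₂
  haveI : Nonempty X := ⟨0⟩
  set ψ := ContractingWith.fixedPoint Φ hcontr with hψdef
  have hfix : Φ ψ = ψ := hcontr.fixedPoint_isFixedPt
  refine ⟨fun t => Real.exp (σ*t) * eψ ψ t,
    (Real.continuous_exp.comp (continuous_const.mul continuous_id)).mul (heψ_cont ψ), ?_⟩
  intro t ht
  have hproj : projIcc 0 T hT.le t = ⟨t, ht⟩ := projIcc_of_mem hT.le ht
  have hψt : eψ ψ t = Real.exp (-(σ*t)) * g t - ∑ i, c i t *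
      ∫ s in (0:ℝ)..t, Real.exp (-(σ*(t-s))) * (t-s) ^ (-(αs i)) * eψ ψ s := by
    have h0 := DFunLike.congr_fun hfix ⟨t, ht⟩
    have h1 : eψ ψ t = ψ ⟨t, ht⟩ := by
      show ψ (projIcc 0 T hT.le t) = _; rw [hproj]
    rw [h1, ← h0]; rfl
  have hkey : ∀ i : Fin n, (∫ s in (0:ℝ)..t, (t - s) ^ (-(αs i)) * (Real.exp (σ*s) * eψ ψ s))
      = Real.exp (σ*t) * ∫ s in (0:ℝ)..t,
          Real.exp (-(σ*(t-s))) * (t-s) ^ (-(αs i)) * eψ ψ s := by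
    intro i
    rw [← intervalIntegral.integral_const_mul]
    refine intervalIntegral.integral_congr fun s _ => ?_
    have hexp : Real.exp (σ*t) * Real.exp (-(σ*(t-s))) = Real.exp (σ*s) := by
      rw [← Real.exp_add]; ring_nf
    calc (t - s) ^ (-(αs i)) * (Real.exp (σ*s) * eψ ψ s)
        = Real.exp (σ*s) * ((t - s) ^ (-(αs i)) * eψ ψ s) := by ring
      _ = Real.exp (σ*t) * (Real.exp (-(σ*(t-s))) * (t-s) ^ (-(αs i)) * eψ ψ s) := by
          rw [← hexp]; ring
  have hgoal : Real.exp (σ*t) * eψ ψ t + ∑ i, c i t *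
      ∫ s in (0:ℝ)..t, (t-s) ^ (-(αs i)) * (Real.exp (σ*s) * eψ ψ s) = g t := by
    simp only [hkey]
    have hsum2 : ∑ i, c i t * (Real.exp (σ*t) *
        ∫ s in (0:ℝ)..t, Real.exp (-(σ*(t-s))) * (t-s) ^ (-(αs i)) * eψ ψ s)
        = Real.exp (σ*t) * ∑ i, c i t *
        ∫ s in (0:ℝ)..t, Real.exp (-(σ*(t-s))) * (t-s) ^ (-(αs i)) * eψ ψ s := by
      rw [Finset.mul_sum]; exact Finset.sum_congr rfl fun i _ => by ring
    rw [hsum2, hψt]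
    have hexp1 : Real.exp (σ*t) * Real.exp (-(σ*t)) = 1 := by rw [← Real.exp_add]; simp
    linear_combination (g t) * hexp1
  exact hgoal

theorem existence_C1_solution_alpha1_eq_one
    (T : ℝ) (hT : 0 < T)
    (m : ℕ)  -- number of fractional terms of order `< 1` (indices `i = 2, …, ℓ`)
    (αs : Fin m → ℝ)
    (hαs_pos : ∀ i, 0 < αs i)
    (hαs_lt1 : ∀ i, αs i < 1)
    (hαs_dec : ∀ i j : Fin m, i < j → αs j < αs i)
    (q₁ : ℝ → ℝ) (hq₁_cont : ContinuousOn q₁ (Icc 0 T))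
    (hq₁_pos : ∀ t ∈ Icc (0:ℝ) T, 0 < q₁ t)
    (q : Fin m → ℝ → ℝ)
    (hq_cont : ∀ i, ContinuousOn (q i) (Icc 0 T))
    (v : ℝ → ℝ) (hv_cont : ContinuousOn v (Icc 0 T))
    (lam : ℝ) (hlam : 0 ≤ lam)
    (w₀ : ℝ) :
    ∃ w : ℝ → ℝ, ContDiffOn ℝ 1 w (Icc 0 T) ∧ w 0 = w₀ ∧
      ∀ t ∈ Ioc (0:ℝ) T,
        q₁ t * deriv w t
          + (∑ i, q i t * ((1 / Real.Gamma (1 - αs i)) *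
              ∫ s in (0:ℝ)..t, (t - s) ^ (-(αs i)) * deriv w s))
          + lam * w t = v t := by
  -- continuous extensions via projection onto `Icc 0 T`
  set pr : ℝ → ℝ := fun t => ((projIcc 0 T hT.le t : ↥(Icc (0:ℝ) T)) : ℝ) with hprdef
  have hpr_cont : Continuous pr := continuous_subtype_val.comp continuous_projIcc
  have hpr_mem : ∀ t, pr t ∈ Icc (0:ℝ) T := fun t => (projIcc 0 T hT.le t).2
  have hpr_eq : ∀ t ∈ Icc (0:ℝ) T, pr t = t := fun t ht => by
    simp only [hprdef, projIcc_of_mem hT.le ht]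
  have hQ1_cont : Continuous fun t => q₁ (pr t) :=
    hq₁_cont.comp_continuous hpr_cont hpr_mem
  have hQ1_pos : ∀ t, 0 < q₁ (pr t) := fun t => hq₁_pos _ (hpr_mem t)
  have hQ1_ne : ∀ t, q₁ (pr t) ≠ 0 := fun t => (hQ1_pos t).ne'
  have hΓpos : ∀ i : Fin m, 0 < Real.Gamma (1 - αs i) := fun i =>
    Real.Gamma_pos_of_pos (by linarith [hαs_lt1 i])
  -- apply the Volterra existence theorem with `m+1` kernels (last one of order `0`)
  obtain ⟨φ, hφc, hφeq⟩ := volterra_exists T hT (m+1)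
    (Fin.snoc αs 0)
    (by
      intro i
      refine Fin.lastCases ?_ (fun j => ?_) i
      · simp [Fin.snoc_last]
      · simp only [Fin.snoc_castSucc]; exact (hαs_pos j).le)
    (by
      intro i
      refine Fin.lastCases ?_ (fun j => ?_) i
      · simp [Fin.snoc_last]
      · simp only [Fin.snoc_castSucc]; exact hαs_lt1 j)
    (Fin.snoc (fun i t => q i (pr t) / (q₁ (pr t) * Real.Gamma (1 - αs i)))
      (fun t => lam / q₁ (pr t)))
    (by
      intro i
      refine Fin.lastCases ?_ (fun j => ?_) i
      · simp only [Fin.snoc_last]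
        exact continuous_const.div hQ1_cont hQ1_ne
      · simp only [Fin.snoc_castSucc]
        exact ((hq_cont j).comp_continuous hpr_cont hpr_mem).div
          (hQ1_cont.mul continuous_const)
          (fun t => mul_ne_zero (hQ1_ne t) (hΓpos j).ne'))
    (fun t => (v (pr t) - lam * w₀) / q₁ (pr t))
    (((hv_cont.comp_continuous hpr_cont hpr_mem).sub continuous_const).div hQ1_cont hQ1_ne)
  -- the solution
  have hd : ∀ t : ℝ, HasDerivAt (fun t => w₀ + ∫ s in (0:ℝ)..t, φ s) (φ t) t := fun t =>
    ((hφc.integral_hasStrictDerivAt 0 t).hasDerivAt).const_add w₀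
  refine ⟨fun t => w₀ + ∫ s in (0:ℝ)..t, φ s, ?_, ?_, ?_⟩
  · refine (contDiff_one_iff_deriv.2 ⟨fun t => (hd t).differentiableAt, ?_⟩).contDiffOn
    have : deriv (fun t => w₀ + ∫ s in (0:ℝ)..t, φ s) = φ := funext fun t => (hd t).deriv
    rw [this]; exact hφc
  · simp
  · intro t ht
    have ht' : t ∈ Icc (0:ℝ) T := ⟨ht.1.le, ht.2⟩
    have hderiv : deriv (fun t => w₀ + ∫ s in (0:ℝ)..t, φ s) = φ :=
      funext fun t => (hd t).deriv
    rw [hderiv]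
    have key := hφeq t ht'
    simp only [Fin.sum_univ_castSucc, Fin.snoc_castSucc, Fin.snoc_last, neg_zero,
      Real.rpow_zero, one_mul] at key
    rw [hpr_eq t ht'] at key
    have hq1ne : q₁ t ≠ 0 := (hq₁_pos t ht').ne'
    have hsum : ∑ i : Fin m, q i t / (q₁ t * Real.Gamma (1 - αs i)) *
        ∫ s in (0:ℝ)..t, (t - s) ^ (-(αs i)) * φ s
        = (∑ i : Fin m, q i t * ((1 / Real.Gamma (1 - αs i)) *
            ∫ s in (0:ℝ)..t, (t - s) ^ (-(αs i)) * φ s)) / q₁ t := by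
      rw [Finset.sum_div]
      exact Finset.sum_congr rfl fun i _ => by ring
    rw [hsum] at key
    field_simp at key
    have hsum2 : (∑ i : Fin m, q i t * ((1 / Real.Gamma (1 - αs i)) *
          ∫ s in (0:ℝ)..t, (t - s) ^ (-(αs i)) * φ s))
        = ∑ i : Fin m, (q i t * ∫ s in (0:ℝ)..t, (t - s) ^ (-(αs i)) * φ s) /
            Real.Gamma (1 - αs i) :=
      Finset.sum_congr rfl fun i _ => by ring
    rw [hsum2]
    linarith [key]
end

section
/- Let r : [0,T] → L₂(Ω) satisfy r(·,0) = 0, r ∈ L_∞(0,T; L₂(Ω)) ∩ W^{1,∞}(ε,T; L₂(Ω)) for each ε ∈ (0,T]. Then for 0 < α < 1 and each t > 0, ⟨D_t^α r(·,t), r(·,t)⟩ ≥ (D_t^α ‖r(·,t)‖) · ‖r(·,t)‖, where D_t^α is the reformulated Caputo derivative and ⟨·,·⟩, ‖·‖ are the L₂(Ω) inner product and norm. -/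
open MeasureTheory Set intervalIntegral

/-!
Both Caputo derivatives are integrals of the differences `r t - r s` (resp. `‖r t‖ - ‖r s‖`)
against the same nonnegative kernel, so the inequality follows by integrating the pointwise
Cauchy–Schwarz bound `(‖x‖ - ‖y‖) ‖x‖ ≤ ⟪x - y, x⟫`. Both integrands are integrable: `r` is
bounded away from `t` and Lipschitz near `t`, so `‖r t - r s‖ ≤ K (t - s)` and the integrands are
dominated by `K |α| (t - s) ^ (-α)`, which is integrable since `α < 1`.
-/

section InnerProduct

variable {H : Type*} [NormedAddCommGroup H] [InnerProductSpace ℝ H]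

theorem norm_sub_norm_mul_norm_le_inner_sub (x y : H) :
    (‖x‖ - ‖y‖) * ‖x‖ ≤ inner ℝ (x - y) x := by
  rw [inner_sub_left, real_inner_self_eq_norm_mul_norm, sub_mul]
  linarith [real_inner_le_norm y x]

theorem integral_mul_norm_le_inner_integral [CompleteSpace H] {Ω : Type*} [MeasurableSpace Ω]
    {μ : Measure Ω} {k : Ω → ℝ} {f : Ω → H} (x : H) (hk : ∀ᵐ s ∂μ, 0 ≤ k s)
    (hvec : Integrable (fun s => k s • (x - f s)) μ)
    (hsc : Integrable (fun s => k s * (‖x‖ - ‖f s‖)) μ) :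
    (∫ s, k s * (‖x‖ - ‖f s‖) ∂μ) * ‖x‖ ≤ inner ℝ (∫ s, k s • (x - f s) ∂μ) x := by
  calc (∫ s, k s * (‖x‖ - ‖f s‖) ∂μ) * ‖x‖
      = ∫ s, k s * (‖x‖ - ‖f s‖) * ‖x‖ ∂μ := (MeasureTheory.integral_mul_const _ _).symm
    _ ≤ ∫ s, inner ℝ x (k s • (x - f s)) ∂μ := by
        refine integral_mono_ae (hsc.mul_const _) (hvec.const_inner x) (hk.mono fun s hs => ?_)
        simp only [real_inner_smul_right, mul_assoc]
        rw [real_inner_comm]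
        exact mul_le_mul_of_nonneg_left (norm_sub_norm_mul_norm_le_inner_sub _ _) hs
    _ = inner ℝ (∫ s, k s • (x - f s) ∂μ) x := by rw [integral_inner hvec, real_inner_comm]

end InnerProduct

theorem continuousOn_Ioc_of_forall_lipschitzOnWith_Icc {E : Type*} [PseudoEMetricSpace E]
    {f : ℝ → E} {T : ℝ}
    (hf : ∀ ε : ℝ, 0 < ε → ε ≤ T → ∃ C : NNReal, LipschitzOnWith C f (Icc ε T)) :
    ContinuousOn f (Ioc 0 T) := by
  intro s ⟨hs0, hsT⟩
  obtain ⟨L, hL⟩ := hf (s / 2) (by linarith) (by linarith)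
  refine (hL.continuousOn s ⟨by linarith, hsT⟩).mono_of_mem_nhdsWithin ?_
  refine mem_nhdsWithin_iff_exists_mem_nhds_inter.mpr ⟨Ioi (s / 2), Ioi_mem_nhds (by linarith), ?_⟩
  exact fun u ⟨hu, _, huT⟩ => ⟨le_of_lt hu, huT⟩

theorem exists_norm_sub_le_mul_sub_of_lipschitzOnWith {E : Type*} [SeminormedAddCommGroup E]
    {f : ℝ → E} {a b c C : ℝ} {L : NNReal} (hcb : c < b) (hC : ∀ s ∈ Icc a b, ‖f s‖ ≤ C)
    (hL : LipschitzOnWith L f (Icc c b)) :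
    ∃ K : ℝ, ∀ s ∈ Icc a b, ‖f b - f s‖ ≤ K * (b - s) := by
  refine ⟨max L (2 * C / (b - c)), fun s hs => ?_⟩
  have hbs : 0 ≤ b - s := sub_nonneg.mpr hs.2
  rcases lt_or_ge s c with hsc | hcs
  · have hb : ‖f b‖ ≤ C := hC b ⟨hs.1.trans hs.2, le_rfl⟩
    have hCb : 0 ≤ 2 * C / (b - c) := div_nonneg (by linarith [norm_nonneg (f b)]) (by linarith)
    calc ‖f b - f s‖ ≤ ‖f b‖ + ‖f s‖ := norm_sub_le _ _
      _ ≤ 2 * C / (b - c) * (b - c) := by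
          rw [div_mul_cancel₀ _ (by linarith)]; linarith [hC s hs]
      _ ≤ 2 * C / (b - c) * (b - s) := mul_le_mul_of_nonneg_left (by linarith) hCb
      _ ≤ max (↑L) (2 * C / (b - c)) * (b - s) :=
          mul_le_mul_of_nonneg_right (le_max_right _ _) hbs
  · calc ‖f b - f s‖ ≤ L * |b - s| :=
          hL.norm_sub_le ⟨hcb.le, le_rfl⟩ ⟨hcs, hs.2⟩
      _ ≤ max (↑L) (2 * C / (b - c)) * (b - s) := by
          rw [abs_of_nonneg hbs]; exact mul_le_mul_of_nonneg_right (le_max_left _ _) hbs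

theorem integrableOn_mul_sub_rpow_smul_of_norm_le {E : Type*} [NormedAddCommGroup E]
    [NormedSpace ℝ E] {g : ℝ → E} {a t α K : ℝ} (hα : α < 1)
    (hg : AEStronglyMeasurable g (volume.restrict (Ioo a t)))
    (hbound : ∀ s ∈ Ioo a t, ‖g s‖ ≤ K * (t - s)) :
    IntegrableOn (fun s => (α * (t - s) ^ (-α - 1)) • g s) (Ioc a t) := by
  have hpow : IntegrableOn (fun s => (t - s) ^ (-α)) (Ioo a t) := by
    have h := (intervalIntegrable_rpow' (r := -α) (by linarith)).comp_sub_left t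
      (a := 0) (b := t - a)
    rw [sub_zero, sub_sub_cancel] at h
    exact h.symm.1.mono_set Ioo_subset_Ioc_self
  rw [integrableOn_Ioc_iff_integrableOn_Ioo]
  refine Integrable.mono' (hpow.const_mul (|α| * K))
    ((by fun_prop : Measurable fun s => α * (t - s) ^ (-α - 1)).aestronglyMeasurable.smul hg) ?_
  refine (ae_restrict_iff' measurableSet_Ioo).mpr (ae_of_all _ fun s hs => ?_)
  have hts : 0 < t - s := sub_pos.mpr hs.2
  calc ‖(α * (t - s) ^ (-α - 1)) • g s‖ = |α| * (t - s) ^ (-α - 1) * ‖g s‖ := by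
        rw [norm_smul, norm_mul, Real.norm_eq_abs, Real.norm_of_nonneg (by positivity)]
    _ ≤ |α| * (t - s) ^ (-α - 1) * (K * (t - s)) :=
        mul_le_mul_of_nonneg_left (hbound s hs) (by positivity)
    _ = |α| * K * ((t - s) ^ (-α - 1) * (t - s)) := by ring
    _ = |α| * K * (t - s) ^ (-α) := by
        rw [← Real.rpow_add_one hts.ne', sub_add_cancel]

theorem fractional_norm_inequality_L2_general
    {H : Type*} [NormedAddCommGroup H] [InnerProductSpace ℝ H] [CompleteSpace H]
    (T α : ℝ) (hα0 : 0 < α) (hα1 : α < 1)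
    (r : ℝ → H)
    (hr_bdd : ∃ C : ℝ, ∀ t ∈ Icc (0:ℝ) T, ‖r t‖ ≤ C)
    (hr_lip : ∀ ε : ℝ, 0 < ε → ε ≤ T →
      ∃ C : NNReal, LipschitzOnWith C r (Icc ε T))
    (t : ℝ) (ht : t ∈ Ioc (0:ℝ) T) :
    (inner ℝ ((1 / Real.Gamma (1 - α)) •
        (t ^ (-α) • (r t - r 0)
          + ∫ s in (0:ℝ)..t, (α * (t - s) ^ (-α - 1)) • (r t - r s)))
      (r t) : ℝ)
    ≥ ((1 / Real.Gamma (1 - α)) *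
        (t ^ (-α) * (‖r t‖ - ‖r 0‖)
          + ∫ s in (0:ℝ)..t, α * (t - s) ^ (-α - 1) * (‖r t‖ - ‖r s‖)))
      * ‖r t‖ := by
  obtain ⟨ht0, htT⟩ := ht
  obtain ⟨C, hC⟩ := hr_bdd
  obtain ⟨L, hL⟩ := hr_lip (t / 2) (by linarith) (by linarith)
  obtain ⟨K, hK⟩ := exists_norm_sub_le_mul_sub_of_lipschitzOnWith (a := 0) (by linarith)
    (fun s hs => hC s ⟨hs.1, hs.2.trans htT⟩) (hL.mono (Icc_subset_Icc_right htT))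
  have hr_meas : AEStronglyMeasurable r (volume.restrict (Ioo 0 t)) :=
    ((continuousOn_Ioc_of_forall_lipschitzOnWith_Icc hr_lip).mono
      (Ioo_subset_Ioc_self.trans (Ioc_subset_Ioc_right htT))).aestronglyMeasurable measurableSet_Ioo
  have hvec := integrableOn_mul_sub_rpow_smul_of_norm_le hα1
    (aestronglyMeasurable_const.sub hr_meas) (fun s hs => hK s (Ioo_subset_Icc_self hs))
  have hsc := integrableOn_mul_sub_rpow_smul_of_norm_le hα1
    (aestronglyMeasurable_const.sub hr_meas.norm)
    (fun s hs => (abs_norm_sub_norm_le _ _).trans (hK s (Ioo_subset_Icc_self hs)))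
  have hkernel : ∀ᵐ s ∂volume.restrict (Ioc 0 t), 0 ≤ α * (t - s) ^ (-α - 1) :=
    ae_restrict_of_forall_mem measurableSet_Ioc fun s hs =>
      mul_nonneg hα0.le (Real.rpow_nonneg (sub_nonneg.mpr hs.2) _)
  have hint := integral_mul_norm_le_inner_integral (r t) hkernel hvec hsc
  have hpoint := norm_sub_norm_mul_norm_le_inner_sub (r t) (r 0)
  have hΓ : 0 ≤ 1 / Real.Gamma (1 - α) := (one_div_pos.mpr (Real.Gamma_pos_of_pos (by linarith))).le
  have htα : 0 ≤ t ^ (-α) := Real.rpow_nonneg ht0.le _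
  rw [integral_of_le ht0.le, integral_of_le ht0.le, real_inner_smul_left, inner_add_left,
    real_inner_smul_left, mul_assoc]
  refine mul_le_mul_of_nonneg_left ?_ hΓ
  nlinarith [mul_le_mul_of_nonneg_left hpoint htα]

theorem fractional_norm_inequality_L2
    {H : Type*} [NormedAddCommGroup H] [InnerProductSpace ℝ H] [CompleteSpace H]
    (T α : ℝ) (hT : 0 < T) (hα0 : 0 < α) (hα1 : α < 1)
    (r : ℝ → H)
    (hr0 : r 0 = 0)
    (hr_bdd : ∃ C : ℝ, ∀ t ∈ Icc (0:ℝ) T, ‖r t‖ ≤ C)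
    (hr_lip : ∀ ε : ℝ, 0 < ε → ε ≤ T →
      ∃ C : NNReal, LipschitzOnWith C r (Icc ε T))
    (t : ℝ) (ht : t ∈ Ioc (0:ℝ) T) :
    (inner ℝ ((1 / Real.Gamma (1 - α)) •
        (t ^ (-α) • (r t - r 0)
          + ∫ s in (0:ℝ)..t, (α * (t - s) ^ (-α - 1)) • (r t - r s)))
      (r t) : ℝ)
    ≥ ((1 / Real.Gamma (1 - α)) *
        (t ^ (-α) * (‖r t‖ - ‖r 0‖)
          + ∫ s in (0:ℝ)..t, α * (t - s) ^ (-α - 1) * (‖r t‖ - ‖r s‖)))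
      * ‖r t‖ :=
  fractional_norm_inequality_L2_general T α hα0 hα1 r hr_bdd hr_lip t ht
end

section
/- Let w₀ ∈ ℝ, λ ≥ 0, and let w : [0,T] → ℝ solve the multiterm fractional IVP Σᵢ q_i(t) D_t^{α_i} w + λ w = v with w(0) = w₀, under the comparison-principle hypotheses. If also a function ℰ satisfies ℰ(0) ≥ |w₀| and Σᵢ q_i(t) D_t^{α_i} ℰ(t) + λ ℰ(t) ≥ |v(t)| for all t ∈ (0,T], then |w(t)| ≤ ℰ(t) for all t ∈ [0,T]. -/
open MeasureTheory Set intervalIntegral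

/-! If `w > E` somewhere, then `u = E - w + σ t` becomes negative for small `σ > 0`. Where `u`
first reaches a negative level it is minimal over `[0, t]`; there every Caputo derivative of
`E - w` is negative (for the classical derivative thanks to the `σ t` term), so the operator
inequality fails. As `w` and `E` are merely Lipschitz, `deriv` may be a junk value; but the
Lipschitz map `u` sends the first hitting times of all levels onto an interval, so they do not
form a null set and, by Rademacher, one of them is a point of differentiability. The bound
`|w| ≤ E` is this comparison applied to `w` and to `-w`. -/

open Filter
open scoped NNReal

theorem intervalIntegrable_caputo_integrand {a c t : ℝ} {f : ℝ → ℝ} {K : ℝ≥0}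
    (ha : a < 1) (hc : 0 ≤ c) (hct : c < t) (hf : ContinuousOn f (Icc 0 t))
    (hf_lip : LipschitzOnWith K f (Icc c t)) :
    IntervalIntegrable (fun s => a * (t - s) ^ (-a - 1) * (f t - f s)) volume 0 t := by
  have hcont : ContinuousOn (fun s => a * (t - s) ^ (-a - 1) * (f t - f s)) (Ico 0 t) := by
    refine ((continuousOn_const.mul ?_).mul (continuousOn_const.sub (hf.mono Ico_subset_Icc_self)))
    exact (continuousOn_const.sub continuousOn_id).rpow_const
      fun s hs => Or.inl (sub_ne_zero.2 hs.2.ne')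
  refine IntervalIntegrable.trans (b := c) ?_ ?_
  · exact (hcont.mono (Icc_subset_Ico_right hct)).intervalIntegrable_of_Icc hc
  -- near `t` the Lipschitz bound turns the kernel `(t - s) ^ (-a - 1)` into `(t - s) ^ (-a)`
  · have hdom : IntervalIntegrable (fun s => |a| * K * (t - s) ^ (-a)) volume c t := by
      have := (intervalIntegral.intervalIntegrable_rpow' (a := 0) (b := t - c)
        (r := -a) (by linarith)).comp_sub_left t
      simpa using (this.const_mul (|a| * K)).symm
    refine hdom.mono_fun ?_ ?_
    · rw [uIoc_of_le hct.le, ← Measure.restrict_congr_set Ioo_ae_eq_Ioc]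
      exact (hcont.mono fun s hs => ⟨by linarith [hs.1], hs.2⟩).aestronglyMeasurable
        measurableSet_Ioo
    · rw [uIoc_of_le hct.le]
      refine (ae_restrict_iff' measurableSet_Ioc).2 (Eventually.of_forall fun s hs => ?_)
      dsimp only
      rcases hs.2.eq_or_lt with rfl | hst
      · simp only [sub_self, mul_zero, norm_zero]
        exact norm_nonneg _
      have hts : 0 < t - s := sub_pos.2 hst
      have hlip : |f t - f s| ≤ K * (t - s) := by
        simpa [Real.dist_eq, abs_of_pos hts] using
          hf_lip.dist_le_mul t ⟨hct.le, le_rfl⟩ s ⟨hs.1.le, hs.2⟩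
      have hpow : (t - s) ^ (-a - 1) * (t - s) = (t - s) ^ (-a) := by
        rw [Real.rpow_sub_one hts.ne', div_mul_cancel₀ _ hts.ne']
      calc ‖a * (t - s) ^ (-a - 1) * (f t - f s)‖
          = |a| * (t - s) ^ (-a - 1) * |f t - f s| := by
            rw [Real.norm_eq_abs, abs_mul, abs_mul, abs_of_pos (Real.rpow_pos_of_pos hts _)]
        _ ≤ |a| * (t - s) ^ (-a - 1) * (K * (t - s)) := by gcongr
        _ = ‖|a| * K * (t - s) ^ (-a)‖ := by
            rw [← hpow, Real.norm_of_nonneg (by positivity)]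
            ring

theorem caputoR_sub {α t : ℝ} {f g : ℝ → ℝ}
    (hf : IntervalIntegrable (fun s => α * (t - s) ^ (-α - 1) * (f t - f s)) volume 0 t)
    (hg : IntervalIntegrable (fun s => α * (t - s) ^ (-α - 1) * (g t - g s)) volume 0 t) :
    caputoR α f t - caputoR α g t = caputoR α (f - g) t := by
  simp only [caputoR, Pi.sub_apply]
  rw [show (fun s => α * (t - s) ^ (-α - 1) * (f t - g t - (f s - g s)))
      = fun s => α * (t - s) ^ (-α - 1) * (f t - f s) - α * (t - s) ^ (-α - 1) * (g t - g s)
      from funext fun s => by ring, integral_sub hf hg]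
  ring

theorem caputoD_neg (α : ℝ) (w : ℝ → ℝ) (t : ℝ) : caputoD α (-w) t = -caputoD α w t := by
  unfold caputoD
  split_ifs
  · exact deriv.neg
  · simp only [caputoR, Pi.neg_apply]
    rw [show (fun s => α * (t - s) ^ (-α - 1) * (-w t - -w s))
        = fun s => -(α * (t - s) ^ (-α - 1) * (w t - w s)) from funext fun s => by ring,
      intervalIntegral.integral_neg]
    ring

theorem caputoR_neg_of_forall_le {α t : ℝ} {g : ℝ → ℝ} (hα : 0 ≤ α) (hα1 : α < 1) (ht : 0 < t)
    (hmin : ∀ s ∈ Icc 0 t, g t ≤ g s) (h0 : g t < g 0) : caputoR α g t < 0 := by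
  have hΓ : 0 < 1 / Real.Gamma (1 - α) := one_div_pos.2 (Real.Gamma_pos_of_pos (by linarith))
  have hint : ∫ s in (0:ℝ)..t, α * (t - s) ^ (-α - 1) * (g t - g s) ≤ 0 := by
    have : 0 ≤ ∫ s in (0:ℝ)..t, -(α * (t - s) ^ (-α - 1) * (g t - g s)) :=
      integral_nonneg ht.le fun s hs =>
      neg_nonneg.2 (mul_nonpos_of_nonneg_of_nonpos
        (mul_nonneg hα (Real.rpow_nonneg (sub_nonneg.2 hs.2) _)) (sub_nonpos.2 (hmin s hs)))
    rwa [intervalIntegral.integral_neg, neg_nonneg] at this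
  have hfirst : t ^ (-α) * (g t - g 0) < 0 :=
    mul_neg_of_pos_of_neg (Real.rpow_pos_of_pos ht _) (sub_neg.2 h0)
  exact mul_neg_of_pos_of_neg hΓ (by linarith)

theorem deriv_le_neg_of_add_mul_le {g : ℝ → ℝ} {a t σ : ℝ} (ha : a < t)
    (hg : DifferentiableAt ℝ g t) (h : ∀ s ∈ Ioo a t, g t + σ * (t - s) ≤ g s) :
    deriv g t ≤ -σ := by
  have hslope := (hasDerivAt_iff_tendsto_slope.1 hg.hasDerivAt).mono_left (nhdsLT_le_nhdsNE t)
  refine le_of_tendsto hslope ?_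
  filter_upwards [Ioo_mem_nhdsLT ha] with s hs
  rw [slope_def_field, div_le_iff_of_neg (sub_neg.2 hs.2)]
  linarith [h s hs]

theorem caputoD_sub {α c t : ℝ} {f g : ℝ → ℝ} {Kf Kg : ℝ≥0} (hα : α ≤ 1) (hc : 0 ≤ c)
    (hct : c < t) (hf : ContinuousOn f (Icc 0 t)) (hg : ContinuousOn g (Icc 0 t))
    (hf_lip : LipschitzOnWith Kf f (Icc c t)) (hg_lip : LipschitzOnWith Kg g (Icc c t))
    (hf' : DifferentiableAt ℝ f t) (hg' : DifferentiableAt ℝ g t) :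
    caputoD α f t - caputoD α g t = caputoD α (f - g) t := by
  unfold caputoD
  split_ifs with hα1
  · exact (deriv_sub hf' hg').symm
  · have hα1 : α < 1 := lt_of_le_of_ne hα hα1
    exact caputoR_sub (intervalIntegrable_caputo_integrand hα1 hc hct hf hf_lip)
      (intervalIntegrable_caputo_integrand hα1 hc hct hg hg_lip)

theorem caputoD_neg_of_forall_add_mul_le {α σ t : ℝ} {g : ℝ → ℝ} (hα : 0 ≤ α) (hα1 : α ≤ 1)
    (hσ : 0 < σ) (ht : 0 < t) (hg : DifferentiableAt ℝ g t)
    (h : ∀ s ∈ Icc 0 t, g t + σ * (t - s) ≤ g s) : caputoD α g t < 0 := by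
  unfold caputoD
  split_ifs with hα1'
  · exact (deriv_le_neg_of_add_mul_le ht hg fun s hs => h s (Ioo_subset_Icc_self hs)).trans_lt
      (neg_neg_of_pos hσ)
  · refine caputoR_neg_of_forall_le hα (lt_of_le_of_ne hα1 hα1') ht (fun s hs => ?_) ?_
    · nlinarith [h s hs, hs.2]
    · nlinarith [h 0 ⟨le_rfl, ht.le⟩]

def LipschitzAwayFrom (f : ℝ → ℝ) (a b : ℝ) : Prop :=
  ∀ ε t : ℝ, a < ε → ε < t → t ≤ b → ∃ C : ℝ≥0, LipschitzOnWith C f (Icc ε t)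

namespace LipschitzAwayFrom

variable {f g : ℝ → ℝ} {a b : ℝ}

theorem add (hf : LipschitzAwayFrom f a b) (hg : LipschitzAwayFrom g a b) :
    LipschitzAwayFrom (f + g) a b := fun ε t hε hεt htb => by
  obtain ⟨Cf, hCf⟩ := hf ε t hε hεt htb
  obtain ⟨Cg, hCg⟩ := hg ε t hε hεt htb
  exact ⟨Cf + Cg, hCf.add hCg⟩

theorem neg (hf : LipschitzAwayFrom f a b) : LipschitzAwayFrom (-f) a b := fun ε t hε hεt htb => by
  obtain ⟨C, hC⟩ := hf ε t hε hεt htb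
  exact ⟨C, hC.neg⟩

theorem sub (hf : LipschitzAwayFrom f a b) (hg : LipschitzAwayFrom g a b) :
    LipschitzAwayFrom (f - g) a b := by
  simpa only [sub_eq_add_neg] using hf.add hg.neg

theorem mono {b' : ℝ} (hf : LipschitzAwayFrom f a b) (hb : b' ≤ b) : LipschitzAwayFrom f a b' :=
  fun ε t hε hεt htb => hf ε t hε hεt (htb.trans hb)

theorem ae_differentiableAt (hf : LipschitzAwayFrom f a b) :
    ∀ᵐ x, x ∈ Ioo a b → DifferentiableAt ℝ f x := by
  have hq : ∀ q : ℚ, ∀ᵐ x, a < q → x ∈ Ioo (q : ℝ) b → DifferentiableAt ℝ f x := by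
    intro q
    by_cases hqb : (q : ℝ) < b
    · by_cases haq : a < q
      · obtain ⟨C, hC⟩ := hf q b haq hqb le_rfl
        filter_upwards [hC.ae_differentiableWithinAt_of_mem] with x hx _ hxq
        exact (hx (Ioo_subset_Icc_self hxq)).differentiableAt (Icc_mem_nhds hxq.1 hxq.2)
      · exact Eventually.of_forall fun _ h => absurd h haq
    · exact Eventually.of_forall fun x _ hx => absurd (hx.1.trans hx.2) hqb
  filter_upwards [ae_all_iff.2 hq] with x hx hxab
  obtain ⟨q, haq, hqx⟩ := exists_rat_btwn hxab.1
  exact hx q haq ⟨hqx, hxab.2⟩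

end LipschitzAwayFrom

theorem LipschitzWith.lipschitzAwayFrom {f : ℝ → ℝ} {K : ℝ≥0} (hf : LipschitzWith K f)
    (a b : ℝ) : LipschitzAwayFrom f a b :=
  fun _ _ _ _ _ => ⟨K, hf.lipschitzOnWith⟩

theorem LipschitzOnWith.volume_image_null {f : ℝ → ℝ} {K : ℝ≥0} {s : Set ℝ}
    (hf : LipschitzOnWith K f s) (hs : volume s = 0) : volume (f '' s) = 0 := by
  have := hf.hausdorffMeasure_image_le zero_le_one
  rw [hausdorffMeasure_real, hs, mul_zero] at this
  exact le_antisymm this zero_le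

theorem ContinuousOn.exists_first_hit {u : ℝ → ℝ} {a b m : ℝ} (hab : a ≤ b)
    (hu : ContinuousOn u (Icc a b)) (hm : m ∈ Icc (u b) (u a)) :
    ∃ τ ∈ Icc a b, u τ = m ∧ ∀ s ∈ Icc a τ, m ≤ u s := by
  set S := Icc a b ∩ u ⁻¹' Iic m
  have hbdd : BddBelow S := ⟨a, fun x hx => hx.1.1⟩
  have hτS : sInf S ∈ S := (hu.preimage_isClosed_of_isClosed isClosed_Icc isClosed_Iic).csInf_mem
    ⟨b, ⟨hab, le_rfl⟩, hm.1⟩ hbdd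
  have hτ_le : ∀ s ∈ Icc a (sInf S), u s ≤ m → s = sInf S := fun s hs hsm =>
    le_antisymm hs.2 (csInf_le hbdd ⟨⟨hs.1, hs.2.trans hτS.1.2⟩, hsm⟩)
  have hsub : Icc a (sInf S) ⊆ Icc a b := Icc_subset_Icc_right hτS.1.2
  obtain ⟨s, hs, hsm⟩ := intermediate_value_Icc' hτS.1.1 (hu.mono hsub) ⟨hτS.2, hm.2⟩
  have hτm : u (sInf S) = m := hτ_le s hs hsm.le ▸ hsm
  refine ⟨sInf S, hτS.1, hτm, fun s hs => ?_⟩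
  by_contra! hlt
  rw [hτ_le s hs hlt.le, hτm] at hlt
  exact lt_irrefl m hlt

theorem ContinuousOn.exists_forall_le_lt_of_ae {u : ℝ → ℝ} {P : ℝ → Prop} {a b c : ℝ}
    (hab : a ≤ b) (hu : ContinuousOn u (Icc a b)) (hu_lip : LipschitzAwayFrom u a b)
    (hP : ∀ᵐ x, x ∈ Ioo a b → P x) (hb : u b < c) (ha : c < u a) :
    ∃ t ∈ Ioo a b, P t ∧ u t < c ∧ ∀ s ∈ Icc a t, u t ≤ u s := by
  choose! τ hτ_mem hτ_eq hτ_min using fun m (hm : m ∈ Icc (u b) (u a)) =>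
    hu.exists_first_hit hab hm
  have hlevel : ∀ m ∈ Ioc (u b) c, m ∈ Icc (u b) (u a) := fun m hm => ⟨hm.1.le, hm.2.trans ha.le⟩
  have hc : c ∈ Ioc (u b) c := ⟨hb, le_rfl⟩
  have hτ_mem' : ∀ m ∈ Ioc (u b) c, τ m ∈ Ioo a b := fun m hm => by
    have hm' := hlevel m hm
    refine ⟨(hτ_mem m hm').1.lt_of_ne fun h => ?_, (hτ_mem m hm').2.lt_of_ne fun h => ?_⟩
    · have := hτ_eq m hm'
      rw [← h] at this
      linarith [hm.2]
    · have := hτ_eq m hm'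
      rw [h] at this
      linarith [hm.1]
  have hτ_gt : ∀ m ∈ Ioo (u b) c, τ c < τ m := fun m hm => lt_of_not_ge fun h => by
    have := hτ_min c (hlevel c hc) (τ m) ⟨(hτ_mem' m ⟨hm.1, hm.2.le⟩).1.le, h⟩
    linarith [hτ_eq m (hlevel m ⟨hm.1, hm.2.le⟩), hm.2]
  obtain ⟨K, hK⟩ := hu_lip (τ c) b (hτ_mem' c hc).1 (hτ_mem' c hc).2 le_rfl
  obtain ⟨m, hm, hPm⟩ : ∃ m ∈ Ioo (u b) c, P (τ m) := by
    by_contra! hbad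
    have hnull : volume (τ '' Ioo (u b) c) = 0 := by
      refine measure_mono_null ?_ (ae_iff.1 hP)
      rintro _ ⟨m, hm, rfl⟩
      exact fun h => hbad m hm (h (hτ_mem' m ⟨hm.1, hm.2.le⟩))
    have hsub : τ '' Ioo (u b) c ⊆ Icc (τ c) b := by
      rintro _ ⟨m, hm, rfl⟩
      exact ⟨(hτ_gt m hm).le, (hτ_mem' m ⟨hm.1, hm.2.le⟩).2.le⟩
    -- `u` would map the null set `τ '' Ioo (u b) c` onto the interval `Ioo (u b) c`
    have hcover : Ioo (u b) c ⊆ u '' (τ '' Ioo (u b) c) := fun m hm =>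
      ⟨τ m, mem_image_of_mem τ hm, hτ_eq m (hlevel m ⟨hm.1, hm.2.le⟩)⟩
    have := measure_mono_null hcover ((hK.mono hsub).volume_image_null hnull)
    rw [Real.volume_Ioo, ENNReal.ofReal_eq_zero] at this
    linarith
  have hm' := hlevel m ⟨hm.1, hm.2.le⟩
  refine ⟨τ m, hτ_mem' m ⟨hm.1, hm.2.le⟩, hPm, (hτ_eq m hm').symm ▸ hm.2, fun s hs => ?_⟩
  rw [hτ_eq m hm']
  exact hτ_min m hm' s hs

theorem sum_mul_lt_sum_mul_of_sum_pos {ι : Type*} [Fintype ι] {q x y : ι → ℝ}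
    (hq : ∀ i, 0 ≤ q i) (hsum : 0 < ∑ i, q i) (hxy : ∀ i, x i < y i) :
    ∑ i, q i * x i < ∑ i, q i * y i := by
  obtain ⟨j, -, hj⟩ := Finset.exists_lt_of_sum_lt
    (show ∑ _ : ι, (0:ℝ) < ∑ i, q i by simpa using hsum)
  exact Finset.sum_lt_sum (fun i _ => mul_le_mul_of_nonneg_left (hxy i).le (hq i))
    ⟨j, Finset.mem_univ j, mul_lt_mul_of_pos_left (hxy j) hj⟩

section Multiterm

variable {ι : Type*} [Fintype ι] {α : ι → ℝ} {q : ι → ℝ → ℝ} {lam : ℝ}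

noncomputable def multitermOp (α : ι → ℝ) (q : ι → ℝ → ℝ) (lam : ℝ) (w : ℝ → ℝ) (t : ℝ) : ℝ :=
  (∑ i, q i t * caputoD (α i) w t) + lam * w t

theorem multitermOp_neg (w : ℝ → ℝ) (t : ℝ) :
    multitermOp α q lam (-w) t = -multitermOp α q lam w t := by
  simp only [multitermOp, caputoD_neg, Pi.neg_apply, mul_neg, Finset.sum_neg_distrib]
  ring

theorem multitermOp_lt_of_forall_add_mul_le {w E : ℝ → ℝ} {σ t : ℝ} (hα : ∀ i, 0 ≤ α i)
    (hα1 : ∀ i, α i ≤ 1) (hq : ∀ i, 0 ≤ q i t) (hq_sum : 0 < ∑ i, q i t) (hlam : 0 ≤ lam)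
    (ht : 0 < t) (hw : ContinuousOn w (Icc 0 t)) (hE : ContinuousOn E (Icc 0 t))
    (hw_lip : LipschitzAwayFrom w 0 t) (hE_lip : LipschitzAwayFrom E 0 t)
    (hw' : DifferentiableAt ℝ w t) (hE' : DifferentiableAt ℝ E t) (hσ : 0 < σ)
    (hmin : ∀ s ∈ Icc 0 t, (E - w) t + σ * (t - s) ≤ (E - w) s) (hEw : E t ≤ w t) :
    multitermOp α q lam E t < multitermOp α q lam w t := by
  have hcaputo : ∀ i, caputoD (α i) E t < caputoD (α i) w t := fun i => by
    obtain ⟨Kw, hKw⟩ := hw_lip (t / 2) t (half_pos ht) (half_lt_self ht) le_rfl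
    obtain ⟨KE, hKE⟩ := hE_lip (t / 2) t (half_pos ht) (half_lt_self ht) le_rfl
    have hsub := caputoD_sub (hα1 i) (half_pos ht).le (half_lt_self ht) hE hw hKE hKw hE' hw'
    linarith [caputoD_neg_of_forall_add_mul_le (hα i) (hα1 i) hσ ht (hE'.sub hw') hmin]
  have hsum := sum_mul_lt_sum_mul_of_sum_pos hq hq_sum hcaputo
  have hlamEw : lam * E t ≤ lam * w t := mul_le_mul_of_nonneg_left hEw hlam
  unfold multitermOp
  linarith

theorem le_of_multitermOp_le {T : ℝ} {w E : ℝ → ℝ} (hα : ∀ i, 0 ≤ α i) (hα1 : ∀ i, α i ≤ 1)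
    (hq_nonneg : ∀ i, ∀ t ∈ Icc (0:ℝ) T, 0 ≤ q i t) (hq_sum : ∀ t ∈ Icc (0:ℝ) T, 0 < ∑ i, q i t)
    (hlam : 0 ≤ lam) (hw : ContinuousOn w (Icc 0 T)) (hE : ContinuousOn E (Icc 0 T))
    (hw_lip : LipschitzAwayFrom w 0 T) (hE_lip : LipschitzAwayFrom E 0 T) (h0 : w 0 ≤ E 0)
    (hL : ∀ t ∈ Ioc (0:ℝ) T, multitermOp α q lam w t ≤ multitermOp α q lam E t) :
    ∀ t ∈ Icc (0:ℝ) T, w t ≤ E t := by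
  intro t₀ ht₀
  by_contra! hlt
  obtain ⟨σ, hσ, hσt₀⟩ : ∃ σ > 0, E t₀ - w t₀ + σ * t₀ < 0 := by
    refine ⟨(w t₀ - E t₀) / (2 * (t₀ + 1)), div_pos (by linarith) (by linarith [ht₀.1]), ?_⟩
    have : (w t₀ - E t₀) / (2 * (t₀ + 1)) * t₀ ≤ (w t₀ - E t₀) / 2 := by
      rw [div_mul_eq_mul_div, div_le_div_iff₀ (by linarith [ht₀.1]) two_pos]
      nlinarith [ht₀.1]
    linarith
  set u := E - w + fun t => σ * t
  have hu : ∀ t, u t = E t - w t + σ * t := fun t => rfl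
  have hu_cont : ContinuousOn u (Icc 0 t₀) :=
    ((hE.sub hw).add (continuousOn_const.mul continuousOn_id)).mono (Icc_subset_Icc_right ht₀.2)
  have hu_lip : LipschitzAwayFrom u 0 t₀ :=
    ((hE_lip.sub hw_lip).add ((lipschitzWith_smul σ).lipschitzAwayFrom 0 T)).mono ht₀.2
  have hdiff : ∀ᵐ x, x ∈ Ioo 0 t₀ → DifferentiableAt ℝ w x ∧ DifferentiableAt ℝ E x := by
    filter_upwards [(hw_lip.mono ht₀.2).ae_differentiableAt,
      (hE_lip.mono ht₀.2).ae_differentiableAt] with x hwx hEx hx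
    exact ⟨hwx hx, hEx hx⟩
  obtain ⟨t₁, ht₁, ⟨hw₁, hE₁⟩, hut₁, hmin⟩ :=
    hu_cont.exists_forall_le_lt_of_ae (c := u t₀ / 2) ht₀.1 hu_lip hdiff
      (by linarith [hu t₀]) (by linarith [hu t₀, hu 0])
  have ht₁T : t₁ ≤ T := ht₁.2.le.trans ht₀.2
  have ht₁' : t₁ ∈ Icc 0 T := ⟨ht₁.1.le, ht₁T⟩
  refine (hL t₁ ⟨ht₁.1, ht₁T⟩).not_gt <| multitermOp_lt_of_forall_add_mul_le hα hα1
    (fun i => hq_nonneg i t₁ ht₁') (hq_sum t₁ ht₁') hlam ht₁.1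
    (hw.mono (Icc_subset_Icc_right ht₁T)) (hE.mono (Icc_subset_Icc_right ht₁T))
    (hw_lip.mono ht₁T) (hE_lip.mono ht₁T) hw₁ hE₁ hσ (fun s hs => ?_) ?_
  · simp only [Pi.sub_apply]
    linarith [hmin s hs, hu s, hu t₁]
  · nlinarith [hu t₀, hu t₁, mul_pos hσ ht₁.1]

end Multiterm

theorem barrier_bound_multiterm_IVP_general
    (T : ℝ)
    (ℓ : ℕ)
    (α : Fin ℓ → ℝ)
    (hα_pos : ∀ i, 0 < α i)
    (hα_le1 : ∀ i, α i ≤ 1)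
    (q : Fin ℓ → ℝ → ℝ)
    (hq_nonneg : ∀ i, ∀ t ∈ Icc (0:ℝ) T, 0 ≤ q i t)
    (hq_sum : ∀ t ∈ Icc (0:ℝ) T, 0 < ∑ i, q i t)
    (lam : ℝ) (hlam : 0 ≤ lam)
    (v : ℝ → ℝ) (w₀ : ℝ)
    (w E : ℝ → ℝ)
    (hw_cont : ContinuousOn w (Icc 0 T))
    (hE_cont : ContinuousOn E (Icc 0 T))
    (hw_lip : ∀ ε t : ℝ, 0 < ε → ε < t → t ≤ T →
      ∃ C : NNReal, LipschitzOnWith C w (Icc ε t))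
    (hE_lip : ∀ ε t : ℝ, 0 < ε → ε < t → t ≤ T →
      ∃ C : NNReal, LipschitzOnWith C E (Icc ε t))
    (hw0 : w 0 = w₀)
    (heq : ∀ t ∈ Ioc (0:ℝ) T,
      (∑ i, q i t * caputoD (α i) w t) + lam * w t = v t)
    (hE0 : |w₀| ≤ E 0)
    (hE : ∀ t ∈ Ioc (0:ℝ) T,
      |v t| ≤ (∑ i, q i t * caputoD (α i) E t) + lam * E t) :
    ∀ t ∈ Icc (0:ℝ) T, |w t| ≤ E t := by
  have hα : ∀ i, 0 ≤ α i := fun i => (hα_pos i).le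
  have hLw : ∀ t ∈ Ioc (0:ℝ) T, multitermOp α q lam w t = v t := heq
  intro t ht
  refine abs_le.2 ⟨neg_le.1 ?_, ?_⟩
  · refine le_of_multitermOp_le hα hα_le1 hq_nonneg hq_sum hlam hw_cont.neg hE_cont
      (LipschitzAwayFrom.neg hw_lip) hE_lip ?_ (fun s hs => ?_) t ht
    · simpa [hw0] using (neg_le_abs w₀).trans hE0
    · rw [multitermOp_neg, hLw s hs]
      exact (neg_le_abs _).trans (hE s hs)
  · refine le_of_multitermOp_le hα hα_le1 hq_nonneg hq_sum hlam hw_cont hE_cont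
      hw_lip hE_lip ?_ (fun s hs => ?_) t ht
    · exact hw0 ▸ (le_abs_self w₀).trans hE0
    · exact (hLw s hs).trans_le ((le_abs_self _).trans (hE s hs))

theorem barrier_bound_multiterm_IVP
    (T : ℝ) (hT : 0 < T)
    (ℓ : ℕ) (hℓ : 1 ≤ ℓ)
    (α : Fin ℓ → ℝ)
    (hα_pos : ∀ i, 0 < α i)
    (hα_le1 : ∀ i, α i ≤ 1)
    (hα_dec : ∀ i j : Fin ℓ, i < j → α j < α i)
    (q : Fin ℓ → ℝ → ℝ)
    (hq_cont : ∀ i, ContinuousOn (q i) (Icc 0 T))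
    (hq_nonneg : ∀ i, ∀ t ∈ Icc (0:ℝ) T, 0 ≤ q i t)
    (hq_sum : ∀ t ∈ Icc (0:ℝ) T, 0 < ∑ i, q i t)
    (lam : ℝ) (hlam : 0 ≤ lam)
    (v : ℝ → ℝ) (w₀ : ℝ)
    (w E : ℝ → ℝ)
    (hw_cont : ContinuousOn w (Icc 0 T))
    (hE_cont : ContinuousOn E (Icc 0 T))
    (hw_lip : ∀ ε t : ℝ, 0 < ε → ε < t → t ≤ T →
      ∃ C : NNReal, LipschitzOnWith C w (Icc ε t))
    (hE_lip : ∀ ε t : ℝ, 0 < ε → ε < t → t ≤ T →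
      ∃ C : NNReal, LipschitzOnWith C E (Icc ε t))
    (hw0 : w 0 = w₀)
    (heq : ∀ t ∈ Ioc (0:ℝ) T,
      (∑ i, q i t * caputoD (α i) w t) + lam * w t = v t)
    (hE0 : |w₀| ≤ E 0)
    (hE : ∀ t ∈ Ioc (0:ℝ) T,
      |v t| ≤ (∑ i, q i t * caputoD (α i) E t) + lam * E t) :
    ∀ t ∈ Icc (0:ℝ) T, |w t| ≤ E t :=
  barrier_bound_multiterm_IVP_general T ℓ α hα_pos hα_le1 q hq_nonneg hq_sum lam hlam v w₀ w E
    hw_cont hE_cont hw_lip hE_lip hw0 heq hE0 hE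
end
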